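/- arXiv:2004.06471 — 9 statements merged into one kernel-verified Lean document; each statement's English description precedes it below -/
import Mathlib

section
/- Any solution (u,θ) ∈ V × W of the discrete stationary Boussinesq system satisfies the a priori bounds ‖θ‖_W ≤ K₂ = κ⁻¹‖γ‖₋₁ and ‖u‖_V ≤ K₁ = Ri C_P² ν⁻¹ κ⁻¹ ‖γ‖₋₁ + ν⁻¹ ‖f‖₋₁. -/
open scoped RealInnerProductSpace

/-! Testing each equation with the solution itself kills the skew-symmetric convective term,
leaving the energy identities `κ‖θ‖² = γ(θ)` and `ν‖u‖² = Ri c(θ,u) + f(u)`. The first bounds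
`‖θ‖`; inserting that bound into the buoyancy term of the second bounds `‖u‖`. -/

lemma le_inv_mul_of_mul_sq_le {a C r : ℝ} (ha : 0 < a) (hC : 0 ≤ C) (hr : 0 ≤ r)
    (h : a * r ^ 2 ≤ C * r) : r ≤ a⁻¹ * C := by
  rw [le_inv_mul_iff₀ ha]
  rcases hr.eq_or_lt with rfl | hr
  · simpa using hC
  · nlinarith

lemma norm_le_inv_mul_of_inner_self_le {E : Type*} [NormedAddCommGroup E] [InnerProductSpace ℝ E]
    {a C : ℝ} {x : E} (ha : 0 < a) (hC : 0 ≤ C) (h : a * ⟪x, x⟫ ≤ C * ‖x‖) :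
    ‖x‖ ≤ a⁻¹ * C :=
  le_inv_mul_of_mul_sq_le ha hC (norm_nonneg x) (by rwa [real_inner_self_eq_norm_sq] at h)

lemma ContinuousLinearMap.apply_le_opNorm_mul {E : Type*} [SeminormedAddCommGroup E]
    [NormedSpace ℝ E] (f : E →L[ℝ] ℝ) (x : E) : f x ≤ ‖f‖ * ‖x‖ :=
  (le_abs_self _).trans (f.le_opNorm x)

theorem boussinesq_apriori_bounds_general
    {V W : Type*} [NormedAddCommGroup V] [InnerProductSpace ℝ V]
    [NormedAddCommGroup W] [InnerProductSpace ℝ W]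
    (ν κ Ri CP : ℝ) (hν : 0 < ν) (hκ : 0 < κ) (hRi : 0 < Ri)
    (b : V →ₗ[ℝ] V →ₗ[ℝ] V →ₗ[ℝ] ℝ)
    (hb0 : ∀ u v : V, b u v v = 0)
    (bs : V →ₗ[ℝ] W →ₗ[ℝ] W →ₗ[ℝ] ℝ)
    (hbs0 : ∀ (u : V) (φ : W), bs u φ φ = 0)
    (c : W →ₗ[ℝ] V →ₗ[ℝ] ℝ)
    (hc : ∀ (θ : W) (v : V), |c θ v| ≤ CP ^ 2 * ‖θ‖ * ‖v‖)
    (f : V →L[ℝ] ℝ) (γ : W →L[ℝ] ℝ)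
    (u : V) (θ : W)
    (hu : ∀ v : V, b u u v + ν * ⟪u, v⟫ = Ri * c θ v + f v)
    (hθ : ∀ χ : W, bs u θ χ + κ * ⟪θ, χ⟫ = γ χ) :
    ‖θ‖ ≤ κ⁻¹ * ‖γ‖ ∧ ‖u‖ ≤ Ri * CP ^ 2 * ν⁻¹ * κ⁻¹ * ‖γ‖ + ν⁻¹ * ‖f‖ := by
  have hθ_energy : κ * ⟪θ, θ⟫ = γ θ := by simpa [hbs0] using hθ θ
  have hu_energy : ν * ⟪u, u⟫ = Ri * c θ u + f u := by simpa [hb0] using hu u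
  have hθ_bound : ‖θ‖ ≤ κ⁻¹ * ‖γ‖ :=
    norm_le_inv_mul_of_inner_self_le hκ (norm_nonneg γ)
      (hθ_energy.trans_le (γ.apply_le_opNorm_mul θ))
  refine ⟨hθ_bound, ?_⟩
  have hforcing : Ri * c θ u + f u ≤ (Ri * CP ^ 2 * (κ⁻¹ * ‖γ‖) + ‖f‖) * ‖u‖ := by
    have hbuoy : c θ u ≤ CP ^ 2 * (κ⁻¹ * ‖γ‖) * ‖u‖ :=
      calc c θ u ≤ CP ^ 2 * ‖θ‖ * ‖u‖ := (le_abs_self _).trans (hc θ u)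
        _ ≤ CP ^ 2 * (κ⁻¹ * ‖γ‖) * ‖u‖ := by gcongr
    linarith [mul_le_mul_of_nonneg_left hbuoy hRi.le, f.apply_le_opNorm_mul u]
  have hu_bound := norm_le_inv_mul_of_inner_self_le hν (by positivity)
    (hu_energy.trans_le hforcing)
  linarith [show ν⁻¹ * (Ri * CP ^ 2 * (κ⁻¹ * ‖γ‖) + ‖f‖)
      = Ri * CP ^ 2 * ν⁻¹ * κ⁻¹ * ‖γ‖ + ν⁻¹ * ‖f‖ by ring]

/-- A priori bounds for solutions of the discrete stationary Boussinesq system: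
any solution `(u, θ)` satisfies `‖θ‖ ≤ K₂ = κ⁻¹‖γ‖₋₁` and
`‖u‖ ≤ K₁ = Ri C_P² ν⁻¹ κ⁻¹ ‖γ‖₋₁ + ν⁻¹‖f‖₋₁`. -/
theorem boussinesq_apriori_bounds
    {V W : Type*} [NormedAddCommGroup V] [InnerProductSpace ℝ V] [FiniteDimensional ℝ V]
    [NormedAddCommGroup W] [InnerProductSpace ℝ W] [FiniteDimensional ℝ W]
    (ν κ Ri M CP : ℝ) (hν : 0 < ν) (hκ : 0 < κ) (hRi : 0 < Ri) (hM : 0 < M) (hCP : 0 < CP)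
    (b : V →ₗ[ℝ] V →ₗ[ℝ] V →ₗ[ℝ] ℝ)
    (hb0 : ∀ u v : V, b u v v = 0)
    (hb : ∀ u v w : V, |b u v w| ≤ M * ‖u‖ * ‖v‖ * ‖w‖)
    (bs : V →ₗ[ℝ] W →ₗ[ℝ] W →ₗ[ℝ] ℝ)
    (hbs0 : ∀ (u : V) (φ : W), bs u φ φ = 0)
    (hbs : ∀ (u : V) (φ ψ : W), |bs u φ ψ| ≤ M * ‖u‖ * ‖φ‖ * ‖ψ‖)
    (c : W →ₗ[ℝ] V →ₗ[ℝ] ℝ)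
    (hc : ∀ (θ : W) (v : V), |c θ v| ≤ CP ^ 2 * ‖θ‖ * ‖v‖)
    (f : V →L[ℝ] ℝ) (γ : W →L[ℝ] ℝ)
    (u : V) (θ : W)
    (hu : ∀ v : V, b u u v + ν * ⟪u, v⟫ = Ri * c θ v + f v)
    (hθ : ∀ χ : W, bs u θ χ + κ * ⟪θ, χ⟫ = γ χ) :
    ‖θ‖ ≤ κ⁻¹ * ‖γ‖ ∧ ‖u‖ ≤ Ri * CP ^ 2 * ν⁻¹ * κ⁻¹ * ‖γ‖ + ν⁻¹ * ‖f‖ :=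
  boussinesq_apriori_bounds_general ν κ Ri CP hν hκ hRi b hb0 bs hbs0 c hc f γ u θ hu hθ
end

section
/- (Temperature-component Lipschitz bound.) For all (u,θ), (w,z) ∈ V × W, the temperature components of the solution operator satisfy ‖G₂(u,θ) − G₂(w,z)‖_W ≤ κ⁻¹ M K₂ ‖u − w‖_V. -/
open scoped RealInnerProductSpace

/-!
Testing the temperature equation against the solution itself kills the skew term
`bs u θ θ`, so `κ ‖θ‖² = γ θ` and `‖θ‖ ≤ κ⁻¹ ‖γ‖`. Subtracting the equations for `(u, θ)` and
`(w, z)` and testing with the difference `e` of the temperatures, skew-symmetry again leaves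
`κ ‖e‖² = -bs (u - w) (G₂ w z) e`, which the trilinear bound and the a priori bound turn into
the Lipschitz estimate.
-/

lemma le_inv_mul_of_mul_sq_le_s5 {κ C t : ℝ} (hκ : 0 < κ) (hC : 0 ≤ C) (ht : 0 ≤ t)
    (h : κ * t ^ 2 ≤ C * t) : t ≤ κ⁻¹ * C := by
  rw [le_inv_mul_iff₀ hκ]
  rcases ht.eq_or_lt with rfl | ht
  · simpa using hC
  · exact le_of_mul_le_mul_right (by nlinarith) ht

section SkewAdvection

variable {V W : Type*} [SeminormedAddCommGroup V] [NormedSpace ℝ V]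
  [NormedAddCommGroup W] [InnerProductSpace ℝ W]
  {bs : V →ₗ[ℝ] W →ₗ[ℝ] W →ₗ[ℝ] ℝ} {κ : ℝ}

lemma mul_norm_sq_eq_of_skew_of_forall_eq (hbs0 : ∀ (u : V) (φ : W), bs u φ φ = 0)
    {ℓ : W → ℝ} {u : V} {θ : W} (hθ : ∀ χ : W, bs u θ χ + κ * ⟪θ, χ⟫ = ℓ χ) :
    κ * ‖θ‖ ^ 2 = ℓ θ := by
  rw [← hθ θ, hbs0, real_inner_self_eq_norm_sq, zero_add]

lemma norm_le_inv_mul_opNorm_of_skew (hκ : 0 < κ) (hbs0 : ∀ (u : V) (φ : W), bs u φ φ = 0)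
    {γ : W →L[ℝ] ℝ} {u : V} {θ : W} (hθ : ∀ χ : W, bs u θ χ + κ * ⟪θ, χ⟫ = γ χ) :
    ‖θ‖ ≤ κ⁻¹ * ‖γ‖ := by
  refine le_inv_mul_of_mul_sq_le_s5 hκ (norm_nonneg γ) (norm_nonneg θ) ?_
  rw [mul_norm_sq_eq_of_skew_of_forall_eq hbs0 hθ]
  exact (le_abs_self _).trans (γ.le_opNorm θ)

lemma mul_norm_sub_sq_eq_of_skew (hbs0 : ∀ (u : V) (φ : W), bs u φ φ = 0)
    {ℓ : W → ℝ} {u w : V} {θ z : W}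
    (hθ : ∀ χ : W, bs u θ χ + κ * ⟪θ, χ⟫ = ℓ χ) (hz : ∀ χ : W, bs w z χ + κ * ⟪z, χ⟫ = ℓ χ) :
    κ * ‖θ - z‖ ^ 2 = -bs (u - w) z (θ - z) := by
  have hdiff : bs u θ (θ - z) - bs w z (θ - z) + κ * ⟪θ - z, θ - z⟫ = 0 := by
    rw [inner_sub_left]
    linear_combination hθ (θ - z) - hz (θ - z)
  have hsplit : bs u θ (θ - z) = bs u z (θ - z) := by
    have h := hbs0 u (θ - z)
    rwa [map_sub (bs u), LinearMap.sub_apply, sub_eq_zero] at h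
  rw [real_inner_self_eq_norm_sq, hsplit] at hdiff
  rw [map_sub bs u w, LinearMap.sub_apply, LinearMap.sub_apply]
  linarith

lemma norm_sub_le_of_skew (hκ : 0 < κ) {M : ℝ} (hM : 0 ≤ M)
    (hbs0 : ∀ (u : V) (φ : W), bs u φ φ = 0)
    (hbs : ∀ (u : V) (φ ψ : W), |bs u φ ψ| ≤ M * ‖u‖ * ‖φ‖ * ‖ψ‖)
    {ℓ : W → ℝ} {u w : V} {θ z : W}
    (hθ : ∀ χ : W, bs u θ χ + κ * ⟪θ, χ⟫ = ℓ χ) (hz : ∀ χ : W, bs w z χ + κ * ⟪z, χ⟫ = ℓ χ) :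
    ‖θ - z‖ ≤ κ⁻¹ * (M * ‖u - w‖ * ‖z‖) := by
  refine le_inv_mul_of_mul_sq_le_s5 hκ (by positivity) (norm_nonneg _) ?_
  rw [mul_norm_sub_sq_eq_of_skew hbs0 hθ hz]
  exact (neg_le_abs _).trans (hbs _ _ _)

end SkewAdvection

theorem solution_operator_temperature_lipschitz_general
    {V W : Type*} [NormedAddCommGroup V] [InnerProductSpace ℝ V]
    [NormedAddCommGroup W] [InnerProductSpace ℝ W]
    (ν κ Ri M : ℝ) (hκ : 0 < κ) (hM : 0 < M)
    (b : V →ₗ[ℝ] V →ₗ[ℝ] V →ₗ[ℝ] ℝ)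
    (bs : V →ₗ[ℝ] W →ₗ[ℝ] W →ₗ[ℝ] ℝ)
    (hbs0 : ∀ (u : V) (φ : W), bs u φ φ = 0)
    (hbs : ∀ (u : V) (φ ψ : W), |bs u φ ψ| ≤ M * ‖u‖ * ‖φ‖ * ‖ψ‖)
    (c : W →ₗ[ℝ] V →ₗ[ℝ] ℝ)
    (f : V →L[ℝ] ℝ) (γ : W →L[ℝ] ℝ)
    (G₁ : V → W → V) (G₂ : V → W → W)
    (hG : ∀ (u : V) (θ : W),
      (∀ v : V, b u (G₁ u θ) v + ν * ⟪G₁ u θ, v⟫ = Ri * c (G₂ u θ) v + f v) ∧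
      (∀ χ : W, bs u (G₂ u θ) χ + κ * ⟪G₂ u θ, χ⟫ = γ χ))
    (u w : V) (θ z : W) :
    ‖G₂ u θ - G₂ w z‖ ≤ κ⁻¹ * M * (κ⁻¹ * ‖γ‖) * ‖u - w‖ := by
  have hz_le : ‖G₂ w z‖ ≤ κ⁻¹ * ‖γ‖ := norm_le_inv_mul_opNorm_of_skew hκ hbs0 (hG w z).2
  calc ‖G₂ u θ - G₂ w z‖
      ≤ κ⁻¹ * (M * ‖u - w‖ * ‖G₂ w z‖) :=
        norm_sub_le_of_skew hκ hM.le hbs0 hbs (hG u θ).2 (hG w z).2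
    _ ≤ κ⁻¹ * (M * ‖u - w‖ * (κ⁻¹ * ‖γ‖)) := by gcongr
    _ = κ⁻¹ * M * (κ⁻¹ * ‖γ‖) * ‖u - w‖ := by ring

/-- Temperature-component Lipschitz bound for the solution operator. -/
theorem solution_operator_temperature_lipschitz
    {V W : Type*} [NormedAddCommGroup V] [InnerProductSpace ℝ V] [FiniteDimensional ℝ V]
    [NormedAddCommGroup W] [InnerProductSpace ℝ W] [FiniteDimensional ℝ W]
    (ν κ Ri M CP : ℝ) (hν : 0 < ν) (hκ : 0 < κ) (hRi : 0 < Ri) (hM : 0 < M) (hCP : 0 < CP)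
    (b : V →ₗ[ℝ] V →ₗ[ℝ] V →ₗ[ℝ] ℝ)
    (hb0 : ∀ u v : V, b u v v = 0)
    (hb : ∀ u v w : V, |b u v w| ≤ M * ‖u‖ * ‖v‖ * ‖w‖)
    (bs : V →ₗ[ℝ] W →ₗ[ℝ] W →ₗ[ℝ] ℝ)
    (hbs0 : ∀ (u : V) (φ : W), bs u φ φ = 0)
    (hbs : ∀ (u : V) (φ ψ : W), |bs u φ ψ| ≤ M * ‖u‖ * ‖φ‖ * ‖ψ‖)
    (c : W →ₗ[ℝ] V →ₗ[ℝ] ℝ)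
    (hc : ∀ (θ : W) (v : V), |c θ v| ≤ CP ^ 2 * ‖θ‖ * ‖v‖)
    (f : V →L[ℝ] ℝ) (γ : W →L[ℝ] ℝ)
    (G₁ : V → W → V) (G₂ : V → W → W)
    (hG : ∀ (u : V) (θ : W),
      (∀ v : V, b u (G₁ u θ) v + ν * ⟪G₁ u θ, v⟫ = Ri * c (G₂ u θ) v + f v) ∧
      (∀ χ : W, bs u (G₂ u θ) χ + κ * ⟪G₂ u θ, χ⟫ = γ χ))
    (u w : V) (θ z : W) :
    ‖G₂ u θ - G₂ w z‖ ≤ κ⁻¹ * M * (κ⁻¹ * ‖γ‖) * ‖u - w‖ :=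
  solution_operator_temperature_lipschitz_general ν κ Ri M hκ hM b bs hbs0 hbs c f γ G₁ G₂ hG u w θ
    z
end

section
/- (Lemma 3.3, Lipschitz continuity of G.) Assume the small data condition. Then the solution operator G is Lipschitz continuous in the B-norm with constant C_G = ν^{-1/2} η^{-1/2} M (2K₁² + 3K₂²)^{1/2}: for all (u,θ), (w,z) ∈ V × W, ‖G(u,θ) − G(w,z)‖_B ≤ C_G ‖(u,θ) − (w,z)‖_B. -/
/-!
Testing each linearized equation with its own solution kills the skew-symmetric convection term
and gives the a priori bounds `‖G₂‖ ≤ K₂` and `‖G₁‖ ≤ K₁`. Subtracting the equations at `(u, θ)`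
and `(w, z)` and testing with the difference leaves only the convection of the first solution by
`u - w` and, for the velocity, the buoyancy of the temperature difference. This bounds the
temperature difference by `κ⁻¹ M ‖u - w‖ K₂`; since `Ri C_P² < η ≤ κ`, the buoyancy term is then
at most `M ‖u - w‖ K₂ ‖ΔG₁‖`, so `‖ΔG₁‖ ≤ ν⁻¹ M ‖u - w‖ (K₁ + K₂)`, and adding the weighted squares
gives the B-norm estimate.
-/

open scoped RealInnerProductSpace

lemma le_inv_mul_of_mul_sq_le_mul {a L x : ℝ} (ha : 0 < a) (hL : 0 ≤ L) (hx : 0 ≤ x)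
    (h : a * x ^ 2 ≤ L * x) : x ≤ a⁻¹ * L := by
  rcases hx.eq_or_lt with rfl | hx
  · positivity
  · rw [← div_eq_inv_mul, le_div_iff₀ ha]
    nlinarith

section SkewAddInner

variable {E F : Type*} [NormedAddCommGroup E] [InnerProductSpace ℝ E]

lemma norm_le_inv_mul_of_skew_add_inner_eq {β : E →ₗ[ℝ] E →ₗ[ℝ] ℝ} {ℓ : E → ℝ} {a L : ℝ}
    {x : E} (ha : 0 < a) (hL : 0 ≤ L) (hβ : β x x = 0)
    (hx : ∀ v, β x v + a * ⟪x, v⟫ = ℓ v) (hℓ : ℓ x ≤ L * ‖x‖) : ‖x‖ ≤ a⁻¹ * L := by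
  refine le_inv_mul_of_mul_sq_le_mul ha hL (norm_nonneg x) ?_
  have := hx x
  rw [hβ, real_inner_self_eq_norm_sq, zero_add] at this
  linarith

variable [AddCommGroup F] [Module ℝ F]

-- The convection terms combine to `β (u - w) x (x - y) + β w (x - y) (x - y)`; the second vanishes.
lemma mul_norm_sub_sq_eq_of_skew_add_inner_eq {β : F →ₗ[ℝ] E →ₗ[ℝ] E →ₗ[ℝ] ℝ}
    (hβ : ∀ w e, β w e e = 0) {ℓ ℓ' : E → ℝ} {a : ℝ} {u w : F} {x y : E}
    (hx : ∀ v, β u x v + a * ⟪x, v⟫ = ℓ v) (hy : ∀ v, β w y v + a * ⟪y, v⟫ = ℓ' v) :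
    a * ‖x - y‖ ^ 2 = ℓ (x - y) - ℓ' (x - y) - β (u - w) x (x - y) := by
  have hskew := hβ w (x - y)
  rw [← real_inner_self_eq_norm_sq, ← hx, ← hy]
  simp only [map_sub, LinearMap.sub_apply, inner_sub_left, inner_sub_right] at hskew ⊢
  linear_combination -hskew

end SkewAddInner

section SkewAddInnerBound

variable {E F : Type*} [NormedAddCommGroup E] [InnerProductSpace ℝ E]
  [SeminormedAddCommGroup F] [Module ℝ F]

lemma norm_sub_le_of_skew_add_inner_eq {β : F →ₗ[ℝ] E →ₗ[ℝ] E →ₗ[ℝ] ℝ}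
    (hβ : ∀ w e, β w e e = 0) {M : ℝ} (hM : 0 ≤ M)
    (hβM : ∀ w v e, |β w v e| ≤ M * ‖w‖ * ‖v‖ * ‖e‖)
    {ℓ ℓ' : E → ℝ} {a D R : ℝ} {u w : F} {x y : E} (ha : 0 < a) (hD : 0 ≤ D)
    (hx : ∀ v, β u x v + a * ⟪x, v⟫ = ℓ v) (hy : ∀ v, β w y v + a * ⟪y, v⟫ = ℓ' v)
    (hℓ : ℓ (x - y) - ℓ' (x - y) ≤ D * ‖x - y‖) (hxR : ‖x‖ ≤ R) :
    ‖x - y‖ ≤ a⁻¹ * (D + M * ‖u - w‖ * R) := by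
  have hR : 0 ≤ R := (norm_nonneg x).trans hxR
  refine le_inv_mul_of_mul_sq_le_mul ha (by positivity) (norm_nonneg _) ?_
  rw [mul_norm_sub_sq_eq_of_skew_add_inner_eq hβ hx hy]
  have hconv : -β (u - w) x (x - y) ≤ M * ‖u - w‖ * R * ‖x - y‖ :=
    calc -β (u - w) x (x - y) ≤ M * ‖u - w‖ * ‖x‖ * ‖x - y‖ := (neg_le_abs _).trans (hβM _ _ _)
      _ ≤ M * ‖u - w‖ * R * ‖x - y‖ := by gcongr
  linarith

end SkewAddInnerBound

lemma sqrt_weighted_sum_sq_le {ν κ M K₁ K₂ d t e δ : ℝ} (hν : 0 < ν) (hκ : 0 < κ) (hM : 0 ≤ M)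
    (he0 : 0 ≤ e) (hδ0 : 0 ≤ δ) (he : e ≤ ν⁻¹ * (M * d * (K₁ + K₂)))
    (hδ : δ ≤ κ⁻¹ * (M * d * K₂)) :
    √(ν * e ^ 2 + κ * δ ^ 2) ≤
      (√ν)⁻¹ * (√(min ν κ))⁻¹ * M * √(2 * K₁ ^ 2 + 3 * K₂ ^ 2) * √(ν * d ^ 2 + κ * t ^ 2) := by
  set η := min ν κ
  have hη : 0 < η := lt_min hν hκ
  set S := 2 * K₁ ^ 2 + 3 * K₂ ^ 2
  have hνη : ν⁻¹ ≤ η⁻¹ := inv_anti₀ hη (min_le_left ν κ)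
  have hκη : κ⁻¹ ≤ η⁻¹ := inv_anti₀ hη (min_le_right ν κ)
  have hsq : ν * e ^ 2 + κ * δ ^ 2 ≤ ν⁻¹ * η⁻¹ * M ^ 2 * S * (ν * d ^ 2 + κ * t ^ 2) :=
    calc ν * e ^ 2 + κ * δ ^ 2
        ≤ ν * (ν⁻¹ * (M * d * (K₁ + K₂))) ^ 2 + κ * (κ⁻¹ * (M * d * K₂)) ^ 2 := by gcongr
      _ = ν⁻¹ * (M * d) ^ 2 * (K₁ + K₂) ^ 2 + κ⁻¹ * (M * d) ^ 2 * K₂ ^ 2 := by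
        field_simp
      _ ≤ η⁻¹ * (M * d) ^ 2 * (2 * K₁ ^ 2 + 2 * K₂ ^ 2) + η⁻¹ * (M * d) ^ 2 * K₂ ^ 2 := by
        gcongr ?_ * _ * ?_ + ?_ * _ * _
        nlinarith [sq_nonneg (K₁ - K₂)]
      _ = ν⁻¹ * η⁻¹ * M ^ 2 * S * (ν * d ^ 2) := by field_simp; ring
      _ ≤ ν⁻¹ * η⁻¹ * M ^ 2 * S * (ν * d ^ 2 + κ * t ^ 2) := by gcongr; nlinarith [sq_nonneg t]
  calc √(ν * e ^ 2 + κ * δ ^ 2) ≤ √(ν⁻¹ * η⁻¹ * M ^ 2 * S * (ν * d ^ 2 + κ * t ^ 2)) :=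
        Real.sqrt_le_sqrt hsq
    _ = _ := by
      rw [Real.sqrt_mul (by positivity), Real.sqrt_mul (by positivity),
        Real.sqrt_mul (by positivity), Real.sqrt_mul (by positivity), Real.sqrt_inv,
        Real.sqrt_inv, Real.sqrt_sq hM]

theorem solution_operator_lipschitz_Bnorm_general
    {V W : Type*} [NormedAddCommGroup V] [InnerProductSpace ℝ V]
    [NormedAddCommGroup W] [InnerProductSpace ℝ W]
    (ν κ Ri M CP : ℝ) (hν : 0 < ν) (hκ : 0 < κ) (hRi : 0 < Ri) (hM : 0 < M)
    (b : V →ₗ[ℝ] V →ₗ[ℝ] V →ₗ[ℝ] ℝ)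
    (hb0 : ∀ u v : V, b u v v = 0)
    (hb : ∀ u v w : V, |b u v w| ≤ M * ‖u‖ * ‖v‖ * ‖w‖)
    (bs : V →ₗ[ℝ] W →ₗ[ℝ] W →ₗ[ℝ] ℝ)
    (hbs0 : ∀ (u : V) (φ : W), bs u φ φ = 0)
    (hbs : ∀ (u : V) (φ ψ : W), |bs u φ ψ| ≤ M * ‖u‖ * ‖φ‖ * ‖ψ‖)
    (c : W →ₗ[ℝ] V →ₗ[ℝ] ℝ)
    (hc : ∀ (θ : W) (v : V), |c θ v| ≤ CP ^ 2 * ‖θ‖ * ‖v‖)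
    (f : V →L[ℝ] ℝ) (γ : W →L[ℝ] ℝ)
    (G₁ : V → W → V) (G₂ : V → W → W)
    (hG : ∀ (u : V) (θ : W),
      (∀ v : V, b u (G₁ u θ) v + ν * ⟪G₁ u θ, v⟫ = Ri * c (G₂ u θ) v + f v) ∧
      (∀ χ : W, bs u (G₂ u θ) χ + κ * ⟪G₂ u θ, χ⟫ = γ χ))
    (hsd2 : (min ν κ)⁻¹ * Ri * CP ^ 2 < 1)
    (u w : V) (θ z : W) :
    Real.sqrt (ν * ‖G₁ u θ - G₁ w z‖ ^ 2 + κ * ‖G₂ u θ - G₂ w z‖ ^ 2)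
      ≤ ((Real.sqrt ν)⁻¹ * (Real.sqrt (min ν κ))⁻¹ * M * Real.sqrt (2 * (Ri * CP ^ 2 * ν⁻¹ * κ⁻¹ * ‖γ‖ + ν⁻¹ * ‖f‖) ^ 2 + 3 * (κ⁻¹ * ‖γ‖) ^ 2)) * Real.sqrt (ν * ‖u - w‖ ^ 2 + κ * ‖θ - z‖ ^ 2) := by
  set K₂ := κ⁻¹ * ‖γ‖
  set K₁ := Ri * CP ^ 2 * ν⁻¹ * κ⁻¹ * ‖γ‖ + ν⁻¹ * ‖f‖
  have hRiκ : Ri * CP ^ 2 ≤ κ := by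
    rw [mul_assoc, inv_mul_lt_one₀ (lt_min hν hκ)] at hsd2
    exact hsd2.le.trans (min_le_right ν κ)
  have hP : ‖G₂ u θ‖ ≤ K₂ :=
    norm_le_inv_mul_of_skew_add_inner_eq hκ (norm_nonneg γ) (hbs0 u _) (hG u θ).2
      ((Real.le_norm_self _).trans (γ.le_opNorm _))
  have hA : ‖G₁ u θ‖ ≤ K₁ := by
    refine (norm_le_inv_mul_of_skew_add_inner_eq hν (L := Ri * CP ^ 2 * K₂ + ‖f‖)
      (by positivity) (hb0 u _) (hG u θ).1 ?_).trans_eq (by ring)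
    have hc' := (le_abs_self _).trans (hc (G₂ u θ) (G₁ u θ))
    have hf' := (Real.le_norm_self _).trans (f.le_opNorm (G₁ u θ))
    calc Ri * c (G₂ u θ) (G₁ u θ) + f (G₁ u θ)
        ≤ Ri * (CP ^ 2 * K₂ * ‖G₁ u θ‖) + ‖f‖ * ‖G₁ u θ‖ := by
          gcongr; exact hc'.trans (by gcongr)
      _ = _ := by ring
  have hPQ : ‖G₂ u θ - G₂ w z‖ ≤ κ⁻¹ * (M * ‖u - w‖ * K₂) := by
    simpa using norm_sub_le_of_skew_add_inner_eq hbs0 hM.le hbs hκ le_rfl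
      (hG u θ).2 (hG w z).2 (by simp) hP
  have hbuoyancy : Ri * CP ^ 2 * ‖G₂ u θ - G₂ w z‖ ≤ M * ‖u - w‖ * K₂ :=
    calc Ri * CP ^ 2 * ‖G₂ u θ - G₂ w z‖ ≤ κ * (κ⁻¹ * (M * ‖u - w‖ * K₂)) := by gcongr
      _ = M * ‖u - w‖ * K₂ := by field_simp
  have hAB : ‖G₁ u θ - G₁ w z‖ ≤ ν⁻¹ * (M * ‖u - w‖ * (K₁ + K₂)) := by
    refine (norm_sub_le_of_skew_add_inner_eq hb0 hM.le hb hν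
      (D := Ri * CP ^ 2 * ‖G₂ u θ - G₂ w z‖) (by positivity) (hG u θ).1 (hG w z).1 ?_ hA).trans
      (by gcongr; linarith)
    rw [add_sub_add_right_eq_sub, ← mul_sub, ← LinearMap.sub_apply, ← map_sub, mul_assoc Ri,
      mul_assoc Ri]
    exact mul_le_mul_of_nonneg_left ((le_abs_self _).trans (hc _ _)) hRi.le
  exact sqrt_weighted_sum_sq_le hν hκ hM.le (norm_nonneg _) (norm_nonneg _) hAB hPQ

/-- Lemma 3.3: the solution operator `G` is Lipschitz continuous in the B-norm with
constant `C_G = ν^(-1/2) η^(-1/2) M (2K₁² + 3K₂²)^(1/2)`. -/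
theorem solution_operator_lipschitz_Bnorm
    {V W : Type*} [NormedAddCommGroup V] [InnerProductSpace ℝ V] [FiniteDimensional ℝ V]
    [NormedAddCommGroup W] [InnerProductSpace ℝ W] [FiniteDimensional ℝ W]
    (ν κ Ri M CP : ℝ) (hν : 0 < ν) (hκ : 0 < κ) (hRi : 0 < Ri) (hM : 0 < M) (hCP : 0 < CP)
    (b : V →ₗ[ℝ] V →ₗ[ℝ] V →ₗ[ℝ] ℝ)
    (hb0 : ∀ u v : V, b u v v = 0)
    (hb : ∀ u v w : V, |b u v w| ≤ M * ‖u‖ * ‖v‖ * ‖w‖)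
    (bs : V →ₗ[ℝ] W →ₗ[ℝ] W →ₗ[ℝ] ℝ)
    (hbs0 : ∀ (u : V) (φ : W), bs u φ φ = 0)
    (hbs : ∀ (u : V) (φ ψ : W), |bs u φ ψ| ≤ M * ‖u‖ * ‖φ‖ * ‖ψ‖)
    (c : W →ₗ[ℝ] V →ₗ[ℝ] ℝ)
    (hc : ∀ (θ : W) (v : V), |c θ v| ≤ CP ^ 2 * ‖θ‖ * ‖v‖)
    (f : V →L[ℝ] ℝ) (γ : W →L[ℝ] ℝ)
    (G₁ : V → W → V) (G₂ : V → W → W)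
    (hG : ∀ (u : V) (θ : W),
      (∀ v : V, b u (G₁ u θ) v + ν * ⟪G₁ u θ, v⟫ = Ri * c (G₂ u θ) v + f v) ∧
      (∀ χ : W, bs u (G₂ u θ) χ + κ * ⟪G₂ u θ, χ⟫ = γ χ))
    (hsd1 : (min ν κ)⁻¹ ^ 2 * M *
        (2 * (Ri * CP ^ 2 * κ⁻¹ * ‖γ‖ + ‖f‖) + κ⁻¹ ^ 2 * M * ‖γ‖ ^ 2) < 1)
    (hsd2 : (min ν κ)⁻¹ * Ri * CP ^ 2 < 1)
    (u w : V) (θ z : W) :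
    Real.sqrt (ν * ‖G₁ u θ - G₁ w z‖ ^ 2 + κ * ‖G₂ u θ - G₂ w z‖ ^ 2)
      ≤ ((Real.sqrt ν)⁻¹ * (Real.sqrt (min ν κ))⁻¹ * M * Real.sqrt (2 * (Ri * CP ^ 2 * ν⁻¹ * κ⁻¹ * ‖γ‖ + ν⁻¹ * ‖f‖) ^ 2 + 3 * (κ⁻¹ * ‖γ‖) ^ 2)) * Real.sqrt (ν * ‖u - w‖ ^ 2 + κ * ‖θ - z‖ ^ 2) :=
  solution_operator_lipschitz_Bnorm_general ν κ Ri M CP hν hκ hRi hM b hb0 hb bs hbs0 hbs c hc f γ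
    G₁ G₂ hG hsd2 u w θ z
end

section
/- (Well-definedness of the candidate derivative G'.) For every (u,θ) ∈ V × W and every (h,s) ∈ V × W there exists a unique pair (g₁,g₂) ∈ V × W satisfying b(h,G₁(u,θ),v) + b(u,g₁,v) + ν⟨g₁,v⟩_V = Ri c(g₂,v) for all v ∈ V and b*(h,G₂(u,θ),χ) + b*(u,g₂,χ) + κ⟨g₂,χ⟩_W = 0 for all χ ∈ W. -/
/-!
Both equations are linear in the unknowns, and the system is triangular: the second equation
involves only `g₂`, and once `g₂` is known the first one involves only `g₁`. Each equation has the
form `B g = L` for the bilinear form `B = b(u,·,·) + ν⟨·,·⟩` (resp. `b*(u,·,·) + κ⟨·,·⟩`), which is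
anisotropic because the trilinear part vanishes on the diagonal. An anisotropic form on a
finite-dimensional space is nondegenerate, so it identifies the space with its dual and every
right-hand side has exactly one solution.
-/

open scoped RealInnerProductSpace

theorem ExistsUnique.prod_of_triangular {α β : Type*} {P : α → β → Prop} {Q : β → Prop}
    (hQ : ∃! y, Q y) (hP : ∀ y, ∃! x, P x y) : ∃! p : α × β, P p.1 p.2 ∧ Q p.2 := by
  obtain ⟨y, hy, hy_unique⟩ := hQ
  obtain ⟨x, hx, hx_unique⟩ := hP y
  refine ⟨(x, y), ⟨hx, hy⟩, ?_⟩
  rintro ⟨x', y'⟩ ⟨hx', hy'⟩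
  obtain rfl : y' = y := hy_unique y' hy'
  obtain rfl : x' = x := hx_unique x' hx'
  rfl

section BilinForm

variable {K E : Type*} [Field K] [AddCommGroup E] [Module K E]

theorem LinearMap.BilinForm.nondegenerate_of_anisotropic {B : LinearMap.BilinForm K E}
    (hB : ∀ x, B x x = 0 → x = 0) : B.Nondegenerate :=
  ⟨fun x hx => hB x (hx x), fun y hy => hB y (hy y)⟩

theorem LinearMap.BilinForm.existsUnique_apply_eq_of_anisotropic [FiniteDimensional K E]
    {B : LinearMap.BilinForm K E} (hB : ∀ x, B x x = 0 → x = 0) (L : Module.Dual K E) :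
    ∃! x, B x = L :=
  (B.toDual (nondegenerate_of_anisotropic hB)).bijective.existsUnique L

end BilinForm

theorem add_smul_innerₗ_anisotropic {E : Type*} [NormedAddCommGroup E] [InnerProductSpace ℝ E]
    {a : E →ₗ[ℝ] E →ₗ[ℝ] ℝ} (ha : ∀ x, a x x = 0) {ν : ℝ} (hν : 0 < ν) (x : E)
    (hx : (a + ν • innerₗ E) x x = 0) : x = 0 := by
  have : ν * ‖x‖ ^ 2 = 0 := by
    simpa [ha, real_inner_self_eq_norm_sq] using hx
  simpa [hν.ne'] using this

theorem derivative_system_wellposed_general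
    {V W : Type*} [NormedAddCommGroup V] [InnerProductSpace ℝ V] [FiniteDimensional ℝ V]
    [NormedAddCommGroup W] [InnerProductSpace ℝ W] [FiniteDimensional ℝ W]
    (ν κ Ri : ℝ) (hν : 0 < ν) (hκ : 0 < κ)
    (b : V →ₗ[ℝ] V →ₗ[ℝ] V →ₗ[ℝ] ℝ)
    (hb0 : ∀ u v : V, b u v v = 0)
    (bs : V →ₗ[ℝ] W →ₗ[ℝ] W →ₗ[ℝ] ℝ)
    (hbs0 : ∀ (u : V) (φ : W), bs u φ φ = 0)
    (c : W →ₗ[ℝ] V →ₗ[ℝ] ℝ)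
    (G₁ : V → W → V) (G₂ : V → W → W)
    (u h : V) (θ : W) :
    ∃! p : V × W,
      (∀ v : V, b h (G₁ u θ) v + b u p.1 v + ν * ⟪p.1, v⟫ = Ri * c p.2 v) ∧
      (∀ χ : W, bs h (G₂ u θ) χ + bs u p.2 χ + κ * ⟪p.2, χ⟫ = 0) := by
  have h_temperature :
      ∃! g₂ : W, ∀ χ, bs h (G₂ u θ) χ + bs u g₂ χ + κ * ⟪g₂, χ⟫ = 0 := by
    refine (existsUnique_congr fun g => ?_).mpr
      (LinearMap.BilinForm.existsUnique_apply_eq_of_anisotropic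
        (add_smul_innerₗ_anisotropic (hbs0 u) hκ) (-bs h (G₂ u θ)))
    rw [LinearMap.ext_iff]
    refine forall_congr' fun χ => ?_
    simp only [LinearMap.add_apply, LinearMap.smul_apply, innerₗ_apply_apply, smul_eq_mul,
      LinearMap.neg_apply]
    constructor <;> intro <;> linarith
  have h_velocity (g₂ : W) :
      ∃! g₁ : V, ∀ v, b h (G₁ u θ) v + b u g₁ v + ν * ⟪g₁, v⟫ = Ri * c g₂ v := by
    refine (existsUnique_congr fun g => ?_).mpr
      (LinearMap.BilinForm.existsUnique_apply_eq_of_anisotropic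
        (add_smul_innerₗ_anisotropic (hb0 u) hν) (Ri • c g₂ - b h (G₁ u θ)))
    rw [LinearMap.ext_iff]
    refine forall_congr' fun v => ?_
    simp only [LinearMap.add_apply, LinearMap.smul_apply, innerₗ_apply_apply, smul_eq_mul,
      LinearMap.sub_apply]
    constructor <;> intro <;> linarith
  exact ExistsUnique.prod_of_triangular h_temperature h_velocity

/-- Well-definedness of the candidate derivative `G'`: for each `(u,θ)` and `(h,s)`
there is a unique pair `(g₁,g₂)` solving the derivative system. -/
theorem derivative_system_wellposed
    {V W : Type*} [NormedAddCommGroup V] [InnerProductSpace ℝ V] [FiniteDimensional ℝ V]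
    [NormedAddCommGroup W] [InnerProductSpace ℝ W] [FiniteDimensional ℝ W]
    (ν κ Ri M CP : ℝ) (hν : 0 < ν) (hκ : 0 < κ) (hRi : 0 < Ri) (hM : 0 < M) (hCP : 0 < CP)
    (b : V →ₗ[ℝ] V →ₗ[ℝ] V →ₗ[ℝ] ℝ)
    (hb0 : ∀ u v : V, b u v v = 0)
    (hb : ∀ u v w : V, |b u v w| ≤ M * ‖u‖ * ‖v‖ * ‖w‖)
    (bs : V →ₗ[ℝ] W →ₗ[ℝ] W →ₗ[ℝ] ℝ)
    (hbs0 : ∀ (u : V) (φ : W), bs u φ φ = 0)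
    (hbs : ∀ (u : V) (φ ψ : W), |bs u φ ψ| ≤ M * ‖u‖ * ‖φ‖ * ‖ψ‖)
    (c : W →ₗ[ℝ] V →ₗ[ℝ] ℝ)
    (hc : ∀ (θ : W) (v : V), |c θ v| ≤ CP ^ 2 * ‖θ‖ * ‖v‖)
    (f : V →L[ℝ] ℝ) (γ : W →L[ℝ] ℝ)
    (G₁ : V → W → V) (G₂ : V → W → W)
    (hG : ∀ (u : V) (θ : W),
      (∀ v : V, b u (G₁ u θ) v + ν * ⟪G₁ u θ, v⟫ = Ri * c (G₂ u θ) v + f v) ∧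
      (∀ χ : W, bs u (G₂ u θ) χ + κ * ⟪G₂ u θ, χ⟫ = γ χ))
    (u h : V) (θ s : W) :
    ∃! p : V × W,
      (∀ v : V, b h (G₁ u θ) v + b u p.1 v + ν * ⟪p.1, v⟫ = Ri * c p.2 v) ∧
      (∀ χ : W, bs h (G₂ u θ) χ + bs u p.2 χ + κ * ⟪p.2, χ⟫ = 0) :=
  derivative_system_wellposed_general ν κ Ri hν hκ b hb0 bs hbs0 c G₁ G₂ u h θ
end

section
/- (Bound (3.17).) For every (u,θ), (h,s) ∈ V × W, the temperature component of G'(u,θ;h,s) satisfies ‖G₂'(u,θ;h,s)‖_W ≤ κ⁻¹ M K₂ ‖h‖_V. -/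
open scoped RealInnerProductSpace

/-- Energy estimate: testing with `χ = x` kills the skew part `B`, leaving `κ ‖x‖² = ℓ x ≤ L ‖x‖`. -/
theorem norm_le_of_forall_skew_add_mul_inner_eq {W : Type*} [NormedAddCommGroup W]
    [InnerProductSpace ℝ W] {B : W →ₗ[ℝ] W →ₗ[ℝ] ℝ} (hB : ∀ φ, B φ φ = 0) {κ L : ℝ}
    (hκ : 0 < κ) (hL : 0 ≤ L) {ℓ : W → ℝ} (hℓ : ∀ χ, ℓ χ ≤ L * ‖χ‖) {x : W}
    (hx : ∀ χ, B x χ + κ * ⟪x, χ⟫ = ℓ χ) : ‖x‖ ≤ κ⁻¹ * L := by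
  have henergy : κ * ‖x‖ * ‖x‖ ≤ L * ‖x‖ := by
    have := hx x
    rw [hB, zero_add, real_inner_self_eq_norm_mul_norm, ← mul_assoc] at this
    exact this ▸ hℓ x
  rcases (norm_nonneg x).eq_or_lt with hx0 | hx0
  · rw [← hx0]
    positivity
  · rw [inv_mul_eq_div, le_div_iff₀ hκ, mul_comm]
    exact le_of_mul_le_mul_right henergy hx0

theorem derivative_temperature_bound_general
    {V W : Type*} [NormedAddCommGroup V] [InnerProductSpace ℝ V]
    [NormedAddCommGroup W] [InnerProductSpace ℝ W]
    (ν κ Ri M : ℝ) (hκ : 0 < κ) (hM : 0 < M)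
    (b : V →ₗ[ℝ] V →ₗ[ℝ] V →ₗ[ℝ] ℝ)
    (bs : V →ₗ[ℝ] W →ₗ[ℝ] W →ₗ[ℝ] ℝ)
    (hbs0 : ∀ (u : V) (φ : W), bs u φ φ = 0)
    (hbs : ∀ (u : V) (φ ψ : W), |bs u φ ψ| ≤ M * ‖u‖ * ‖φ‖ * ‖ψ‖)
    (c : W →ₗ[ℝ] V →ₗ[ℝ] ℝ)
    (f : V →L[ℝ] ℝ) (γ : W →L[ℝ] ℝ)
    (G₁ : V → W → V) (G₂ : V → W → W)
    (hG : ∀ (u : V) (θ : W),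
      (∀ v : V, b u (G₁ u θ) v + ν * ⟪G₁ u θ, v⟫ = Ri * c (G₂ u θ) v + f v) ∧
      (∀ χ : W, bs u (G₂ u θ) χ + κ * ⟪G₂ u θ, χ⟫ = γ χ))
    (G₁' : V → W → V → W → V) (G₂' : V → W → V → W → W)
    (hG' : ∀ (u : V) (θ : W) (h : V) (s : W),
      (∀ v : V, b h (G₁ u θ) v + b u (G₁' u θ h s) v + ν * ⟪G₁' u θ h s, v⟫
          = Ri * c (G₂' u θ h s) v) ∧
      (∀ χ : W, bs h (G₂ u θ) χ + bs u (G₂' u θ h s) χ + κ * ⟪G₂' u θ h s, χ⟫ = 0))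
    (u h : V) (θ s : W) :
    ‖G₂' u θ h s‖ ≤ κ⁻¹ * M * (κ⁻¹ * ‖γ‖) * ‖h‖ := by
  have hG₂ : ‖G₂ u θ‖ ≤ κ⁻¹ * ‖γ‖ :=
    norm_le_of_forall_skew_add_mul_inner_eq (hbs0 u) hκ (norm_nonneg γ)
      (fun χ ↦ (le_abs_self _).trans (γ.le_opNorm χ)) (hG u θ).2
  have hG₂' : ‖G₂' u θ h s‖ ≤ κ⁻¹ * (M * ‖h‖ * ‖G₂ u θ‖) :=
    norm_le_of_forall_skew_add_mul_inner_eq (ℓ := fun χ ↦ -bs h (G₂ u θ) χ) (hbs0 u) hκ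
      (by positivity) (fun χ ↦ (neg_le_abs _).trans (hbs h _ χ))
      (fun χ ↦ by linarith [(hG' u θ h s).2 χ])
  calc ‖G₂' u θ h s‖ ≤ κ⁻¹ * (M * ‖h‖ * ‖G₂ u θ‖) := hG₂'
    _ ≤ κ⁻¹ * (M * ‖h‖ * (κ⁻¹ * ‖γ‖)) := by gcongr
    _ = κ⁻¹ * M * (κ⁻¹ * ‖γ‖) * ‖h‖ := by ring

/-- Bound (3.17): `‖G₂'(u,θ;h,s)‖ ≤ κ⁻¹ M K₂ ‖h‖`. -/
theorem derivative_temperature_bound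
    {V W : Type*} [NormedAddCommGroup V] [InnerProductSpace ℝ V] [FiniteDimensional ℝ V]
    [NormedAddCommGroup W] [InnerProductSpace ℝ W] [FiniteDimensional ℝ W]
    (ν κ Ri M CP : ℝ) (hν : 0 < ν) (hκ : 0 < κ) (hRi : 0 < Ri) (hM : 0 < M) (hCP : 0 < CP)
    (b : V →ₗ[ℝ] V →ₗ[ℝ] V →ₗ[ℝ] ℝ)
    (hb0 : ∀ u v : V, b u v v = 0)
    (hb : ∀ u v w : V, |b u v w| ≤ M * ‖u‖ * ‖v‖ * ‖w‖)
    (bs : V →ₗ[ℝ] W →ₗ[ℝ] W →ₗ[ℝ] ℝ)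
    (hbs0 : ∀ (u : V) (φ : W), bs u φ φ = 0)
    (hbs : ∀ (u : V) (φ ψ : W), |bs u φ ψ| ≤ M * ‖u‖ * ‖φ‖ * ‖ψ‖)
    (c : W →ₗ[ℝ] V →ₗ[ℝ] ℝ)
    (hc : ∀ (θ : W) (v : V), |c θ v| ≤ CP ^ 2 * ‖θ‖ * ‖v‖)
    (f : V →L[ℝ] ℝ) (γ : W →L[ℝ] ℝ)
    (G₁ : V → W → V) (G₂ : V → W → W)
    (hG : ∀ (u : V) (θ : W),
      (∀ v : V, b u (G₁ u θ) v + ν * ⟪G₁ u θ, v⟫ = Ri * c (G₂ u θ) v + f v) ∧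
      (∀ χ : W, bs u (G₂ u θ) χ + κ * ⟪G₂ u θ, χ⟫ = γ χ))
    (G₁' : V → W → V → W → V) (G₂' : V → W → V → W → W)
    (hG' : ∀ (u : V) (θ : W) (h : V) (s : W),
      (∀ v : V, b h (G₁ u θ) v + b u (G₁' u θ h s) v + ν * ⟪G₁' u θ h s, v⟫
          = Ri * c (G₂' u θ h s) v) ∧
      (∀ χ : W, bs h (G₂ u θ) χ + bs u (G₂' u θ h s) χ + κ * ⟪G₂' u θ h s, χ⟫ = 0))
    (u h : V) (θ s : W) :
    ‖G₂' u θ h s‖ ≤ κ⁻¹ * M * (κ⁻¹ * ‖γ‖) * ‖h‖ :=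
  derivative_temperature_bound_general ν κ Ri M hκ hM b bs hbs0 hbs c f γ G₁ G₂ hG G₁' G₂' hG' u h θ
    s
end

section
/- (Bound (3.18).) Assume the small data condition. Then for every (u,θ), (h,s) ∈ V × W, the velocity component of G'(u,θ;h,s) satisfies ‖G₁'(u,θ;h,s)‖_V ≤ ν⁻¹ M (K₁ + K₂) ‖h‖_V. -/
/-!
Testing each weak equation with its own solution kills the skew-symmetric convection term, so
every unknown obeys an energy estimate `a ‖x‖² ≤ C ‖x‖`. Applied in turn to `G₂`, `G₁`, `G₂'` and
`G₁'`, this bounds `‖G₁'‖` by `ν⁻¹ (M ‖h‖ ‖G₁‖ + Ri CP² κ⁻¹ M ‖h‖ ‖G₂‖)`, and the second small data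
condition gives `Ri CP² κ⁻¹ ≤ 1`.
-/

open scoped RealInnerProductSpace

theorem norm_le_of_skew_add_inner_eq {E : Type*} [NormedAddCommGroup E] [InnerProductSpace ℝ E]
    {B : E →ₗ[ℝ] E →ₗ[ℝ] ℝ} {L : E → ℝ} {a C : ℝ} {x : E}
    (ha : 0 < a) (hC : 0 ≤ C) (hB : B x x = 0) (hx : ∀ y, B x y + a * ⟪x, y⟫ = L y)
    (hL : L x ≤ C * ‖x‖) : ‖x‖ ≤ a⁻¹ * C := by
  have henergy := hx x
  rw [hB, zero_add, real_inner_self_eq_norm_sq] at henergy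
  rcases (norm_nonneg x).eq_or_lt with hx0 | hx0
  · rw [← hx0]; positivity
  · rw [inv_mul_eq_div, le_div_iff₀ ha]; nlinarith

theorem norm_le_of_velocity_eq {V W : Type*} [NormedAddCommGroup V] [InnerProductSpace ℝ V]
    [NormedAddCommGroup W] [InnerProductSpace ℝ W] {ν Ri CP K : ℝ}
    {B : V →ₗ[ℝ] V →ₗ[ℝ] ℝ} {F : V → ℝ} {c : W →ₗ[ℝ] V →ₗ[ℝ] ℝ} {w : V} {θ : W}
    (hν : 0 < ν) (hRi : 0 ≤ Ri) (hK : 0 ≤ K)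
    (hc : ∀ (θ : W) (v : V), |c θ v| ≤ CP ^ 2 * ‖θ‖ * ‖v‖)
    (hB : B w w = 0) (hF : F w ≤ K * ‖w‖) (hw : ∀ v, B w v + ν * ⟪w, v⟫ = Ri * c θ v + F v) :
    ‖w‖ ≤ ν⁻¹ * (Ri * CP ^ 2 * ‖θ‖ + K) := by
  refine norm_le_of_skew_add_inner_eq hν (by positivity) hB hw ?_
  have hcw : Ri * c θ w ≤ Ri * (CP ^ 2 * ‖θ‖ * ‖w‖) :=
    mul_le_mul_of_nonneg_left ((le_abs_self _).trans (hc θ w)) hRi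
  linarith

theorem derivative_velocity_bound_general
    {V W : Type*} [NormedAddCommGroup V] [InnerProductSpace ℝ V]
    [NormedAddCommGroup W] [InnerProductSpace ℝ W]
    (ν κ Ri M CP : ℝ) (hν : 0 < ν) (hκ : 0 < κ) (hRi : 0 < Ri) (hM : 0 < M)
    (b : V →ₗ[ℝ] V →ₗ[ℝ] V →ₗ[ℝ] ℝ)
    (hb0 : ∀ u v : V, b u v v = 0)
    (hb : ∀ u v w : V, |b u v w| ≤ M * ‖u‖ * ‖v‖ * ‖w‖)
    (bs : V →ₗ[ℝ] W →ₗ[ℝ] W →ₗ[ℝ] ℝ)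
    (hbs0 : ∀ (u : V) (φ : W), bs u φ φ = 0)
    (hbs : ∀ (u : V) (φ ψ : W), |bs u φ ψ| ≤ M * ‖u‖ * ‖φ‖ * ‖ψ‖)
    (c : W →ₗ[ℝ] V →ₗ[ℝ] ℝ)
    (hc : ∀ (θ : W) (v : V), |c θ v| ≤ CP ^ 2 * ‖θ‖ * ‖v‖)
    (f : V →L[ℝ] ℝ) (γ : W →L[ℝ] ℝ)
    (G₁ : V → W → V) (G₂ : V → W → W)
    (hG : ∀ (u : V) (θ : W),
      (∀ v : V, b u (G₁ u θ) v + ν * ⟪G₁ u θ, v⟫ = Ri * c (G₂ u θ) v + f v) ∧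
      (∀ χ : W, bs u (G₂ u θ) χ + κ * ⟪G₂ u θ, χ⟫ = γ χ))
    (G₁' : V → W → V → W → V) (G₂' : V → W → V → W → W)
    (hG' : ∀ (u : V) (θ : W) (h : V) (s : W),
      (∀ v : V, b h (G₁ u θ) v + b u (G₁' u θ h s) v + ν * ⟪G₁' u θ h s, v⟫
          = Ri * c (G₂' u θ h s) v) ∧
      (∀ χ : W, bs h (G₂ u θ) χ + bs u (G₂' u θ h s) χ + κ * ⟪G₂' u θ h s, χ⟫ = 0))
    (hsd2 : (min ν κ)⁻¹ * Ri * CP ^ 2 < 1)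
    (u h : V) (θ s : W) :
    ‖G₁' u θ h s‖ ≤ ν⁻¹ * M * ((Ri * CP ^ 2 * ν⁻¹ * κ⁻¹ * ‖γ‖ + ν⁻¹ * ‖f‖) + (κ⁻¹ * ‖γ‖)) * ‖h‖ := by
  have hcoupling : Ri * CP ^ 2 * κ⁻¹ ≤ 1 := by
    have := inv_anti₀ (lt_min hν hκ) (min_le_right ν κ)
    nlinarith [mul_nonneg hRi.le (sq_nonneg CP)]
  have hG₂ : ‖G₂ u θ‖ ≤ κ⁻¹ * ‖γ‖ :=
    norm_le_of_skew_add_inner_eq hκ (norm_nonneg γ) (hbs0 u _) (hG u θ).2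
      ((Real.le_norm_self _).trans (γ.le_opNorm _))
  have hG₁ : ‖G₁ u θ‖ ≤ ν⁻¹ * (Ri * CP ^ 2 * ‖G₂ u θ‖ + ‖f‖) :=
    norm_le_of_velocity_eq hν hRi.le (norm_nonneg f) hc (hb0 u _)
      ((Real.le_norm_self _).trans (f.le_opNorm _)) (hG u θ).1
  have hG₂' : ‖G₂' u θ h s‖ ≤ κ⁻¹ * (M * ‖h‖ * ‖G₂ u θ‖) :=
    norm_le_of_skew_add_inner_eq (L := fun χ => -bs h (G₂ u θ) χ) hκ (by positivity) (hbs0 u _)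
      (fun χ => by linarith [(hG' u θ h s).2 χ]) ((neg_le_abs _).trans (hbs _ _ _))
  have hG₁' : ‖G₁' u θ h s‖ ≤ ν⁻¹ * (Ri * CP ^ 2 * ‖G₂' u θ h s‖ + M * ‖h‖ * ‖G₁ u θ‖) :=
    norm_le_of_velocity_eq (F := fun v => -b h (G₁ u θ) v) hν hRi.le (by positivity) hc
      (hb0 u _) ((neg_le_abs _).trans (hb _ _ _)) (fun v => by linarith [(hG' u θ h s).1 v])
  calc ‖G₁' u θ h s‖
      ≤ ν⁻¹ * (Ri * CP ^ 2 * κ⁻¹ * (M * ‖h‖ * ‖G₂ u θ‖) + M * ‖h‖ * ‖G₁ u θ‖) := by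
        refine hG₁'.trans ?_; rw [mul_assoc (Ri * CP ^ 2)]; gcongr
    _ ≤ ν⁻¹ * (M * ‖h‖ * ‖G₂ u θ‖ + M * ‖h‖ * ‖G₁ u θ‖) := by
        gcongr ν⁻¹ * (?_ + _); exact mul_le_of_le_one_left (by positivity) hcoupling
    _ ≤ ν⁻¹ * (M * ‖h‖ * (κ⁻¹ * ‖γ‖) + M * ‖h‖ * (ν⁻¹ * (Ri * CP ^ 2 * (κ⁻¹ * ‖γ‖) + ‖f‖))) := by
        gcongr; exact hG₁.trans (by gcongr)
    _ = ν⁻¹ * M * ((Ri * CP ^ 2 * ν⁻¹ * κ⁻¹ * ‖γ‖ + ν⁻¹ * ‖f‖) + (κ⁻¹ * ‖γ‖)) * ‖h‖ := by ring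

/-- Bound (3.18): under the small data condition,
`‖G₁'(u,θ;h,s)‖ ≤ ν⁻¹ M (K₁ + K₂) ‖h‖`. -/
theorem derivative_velocity_bound
    {V W : Type*} [NormedAddCommGroup V] [InnerProductSpace ℝ V] [FiniteDimensional ℝ V]
    [NormedAddCommGroup W] [InnerProductSpace ℝ W] [FiniteDimensional ℝ W]
    (ν κ Ri M CP : ℝ) (hν : 0 < ν) (hκ : 0 < κ) (hRi : 0 < Ri) (hM : 0 < M) (hCP : 0 < CP)
    (b : V →ₗ[ℝ] V →ₗ[ℝ] V →ₗ[ℝ] ℝ)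
    (hb0 : ∀ u v : V, b u v v = 0)
    (hb : ∀ u v w : V, |b u v w| ≤ M * ‖u‖ * ‖v‖ * ‖w‖)
    (bs : V →ₗ[ℝ] W →ₗ[ℝ] W →ₗ[ℝ] ℝ)
    (hbs0 : ∀ (u : V) (φ : W), bs u φ φ = 0)
    (hbs : ∀ (u : V) (φ ψ : W), |bs u φ ψ| ≤ M * ‖u‖ * ‖φ‖ * ‖ψ‖)
    (c : W →ₗ[ℝ] V →ₗ[ℝ] ℝ)
    (hc : ∀ (θ : W) (v : V), |c θ v| ≤ CP ^ 2 * ‖θ‖ * ‖v‖)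
    (f : V →L[ℝ] ℝ) (γ : W →L[ℝ] ℝ)
    (G₁ : V → W → V) (G₂ : V → W → W)
    (hG : ∀ (u : V) (θ : W),
      (∀ v : V, b u (G₁ u θ) v + ν * ⟪G₁ u θ, v⟫ = Ri * c (G₂ u θ) v + f v) ∧
      (∀ χ : W, bs u (G₂ u θ) χ + κ * ⟪G₂ u θ, χ⟫ = γ χ))
    (G₁' : V → W → V → W → V) (G₂' : V → W → V → W → W)
    (hG' : ∀ (u : V) (θ : W) (h : V) (s : W),
      (∀ v : V, b h (G₁ u θ) v + b u (G₁' u θ h s) v + ν * ⟪G₁' u θ h s, v⟫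
          = Ri * c (G₂' u θ h s) v) ∧
      (∀ χ : W, bs h (G₂ u θ) χ + bs u (G₂' u θ h s) χ + κ * ⟪G₂' u θ h s, χ⟫ = 0))
    (hsd1 : (min ν κ)⁻¹ ^ 2 * M *
        (2 * (Ri * CP ^ 2 * κ⁻¹ * ‖γ‖ + ‖f‖) + κ⁻¹ ^ 2 * M * ‖γ‖ ^ 2) < 1)
    (hsd2 : (min ν κ)⁻¹ * Ri * CP ^ 2 < 1)
    (u h : V) (θ s : W) :
    ‖G₁' u θ h s‖ ≤ ν⁻¹ * M * ((Ri * CP ^ 2 * ν⁻¹ * κ⁻¹ * ‖γ‖ + ν⁻¹ * ‖f‖) + (κ⁻¹ * ‖γ‖)) * ‖h‖ :=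
  derivative_velocity_bound_general ν κ Ri M CP hν hκ hRi hM b hb0 hb bs hbs0 hbs c hc f γ G₁ G₂ hG
    G₁' G₂' hG' hsd2 u h θ s
end

section
/- (Lemma 3.5, uniform bound on G'.) Assume the small data condition. Then for every (u,θ), (h,s) ∈ V × W, ‖G'(u,θ;h,s)‖_B ≤ C_G ‖(h,s)‖_B, where C_G = ν^{-1/2} η^{-1/2} M (2K₁² + 3K₂²)^{1/2}. -/
/-!
Testing each equation with its own solution kills the skew-symmetric advection term, so
coercivity of the diffusion gives `κ ‖G₂‖ ≤ ‖γ‖` and then `ν ‖G₁‖ ≤ Ri C_P² K₂ + ‖f‖`.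
The same test applied to the derivative equations bounds `g₂` and then `g₁` linearly in `‖h‖`,
the buoyancy term being absorbed because `Ri C_P² < η ≤ κ`. Adding the weighted squares and
using `(K₁ + K₂)² + K₂² ≤ 2K₁² + 3K₂²` gives the claim.
-/

open scoped RealInnerProductSpace

theorem mul_norm_le_of_skew_test {E : Type*} [NormedAddCommGroup E] [InnerProductSpace ℝ E]
    (a : E → E → ℝ) (ha : ∀ x, a x x = 0) {x : E} {κ r C : ℝ} (hC : 0 ≤ C)
    (heq : a x x + κ * ⟪x, x⟫ = r) (hr : r ≤ C * ‖x‖) : κ * ‖x‖ ≤ C := by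
  rw [ha, zero_add, real_inner_self_eq_norm_sq] at heq
  rcases (norm_nonneg x).eq_or_lt with hx | hx
  · simpa [← hx] using hC
  · exact le_of_mul_le_mul_right (by linarith) hx

section EnergyEstimates

universe u₁ u₂

variable {V : Type u₁} {W : Type u₂} [NormedAddCommGroup V] [InnerProductSpace ℝ V]
  [NormedAddCommGroup W] [InnerProductSpace ℝ W]

theorem norm_temperature_le (bs : V →ₗ[ℝ] W →ₗ[ℝ] W →ₗ[ℝ] ℝ)
    (hbs0 : ∀ (u : V) (φ : W), bs u φ φ = 0) (γ : W →L[ℝ] ℝ) {κ : ℝ} (hκ : 0 < κ)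
    {u : V} {θ : W} (heq : ∀ χ : W, bs u θ χ + κ * ⟪θ, χ⟫ = γ χ) :
    ‖θ‖ ≤ κ⁻¹ * ‖γ‖ :=
  (le_inv_mul_iff₀ hκ).2 <| mul_norm_le_of_skew_test (bs u · ·) (hbs0 u) (norm_nonneg γ)
    (heq θ) ((Real.le_norm_self _).trans (γ.le_opNorm θ))

theorem norm_velocity_le (b : V →ₗ[ℝ] V →ₗ[ℝ] V →ₗ[ℝ] ℝ) (hb0 : ∀ u v : V, b u v v = 0)
    (c : W →ₗ[ℝ] V →ₗ[ℝ] ℝ) {CP : ℝ} (hc : ∀ (θ : W) (v : V), |c θ v| ≤ CP ^ 2 * ‖θ‖ * ‖v‖)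
    (f : V →L[ℝ] ℝ) {ν Ri K : ℝ} (hν : 0 < ν) (hRi : 0 ≤ Ri) {u ũ : V} {θ : W}
    (hθ : ‖θ‖ ≤ K) (heq : ∀ v : V, b u ũ v + ν * ⟪ũ, v⟫ = Ri * c θ v + f v) :
    ‖ũ‖ ≤ ν⁻¹ * (Ri * CP ^ 2 * K + ‖f‖) := by
  have hK : 0 ≤ K := (norm_nonneg θ).trans hθ
  have hcθ : Ri * c θ ũ ≤ Ri * CP ^ 2 * K * ‖ũ‖ := by
    calc Ri * c θ ũ ≤ Ri * (CP ^ 2 * ‖θ‖ * ‖ũ‖) :=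
          mul_le_mul_of_nonneg_left ((le_abs_self _).trans (hc θ ũ)) hRi
      _ ≤ Ri * CP ^ 2 * K * ‖ũ‖ := by rw [← mul_assoc, ← mul_assoc]; gcongr
  have hfũ : f ũ ≤ ‖f‖ * ‖ũ‖ := (Real.le_norm_self _).trans (f.le_opNorm ũ)
  refine (le_inv_mul_iff₀ hν).2 <| mul_norm_le_of_skew_test (b u · ·) (hb0 u) (by positivity)
    (heq ũ) ?_
  linarith

theorem mul_norm_derivTemperature_le (bs : V →ₗ[ℝ] W →ₗ[ℝ] W →ₗ[ℝ] ℝ)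
    (hbs0 : ∀ (u : V) (φ : W), bs u φ φ = 0) {M : ℝ}
    (hbs : ∀ (u : V) (φ ψ : W), |bs u φ ψ| ≤ M * ‖u‖ * ‖φ‖ * ‖ψ‖) (hM : 0 ≤ M) {κ K : ℝ}
    {u h : V} {θ g : W} (hθ : ‖θ‖ ≤ K)
    (heq : ∀ χ : W, bs h θ χ + bs u g χ + κ * ⟪g, χ⟫ = 0) :
    κ * ‖g‖ ≤ M * K * ‖h‖ := by
  have hK : 0 ≤ K := (norm_nonneg θ).trans hθ
  refine mul_norm_le_of_skew_test (bs u · ·) (hbs0 u) (by positivity)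
    (r := -bs h θ g) (by linarith [heq g]) ?_
  calc -bs h θ g ≤ M * ‖h‖ * ‖θ‖ * ‖g‖ := (neg_le_abs _).trans (hbs h θ g)
    _ ≤ M * K * ‖h‖ * ‖g‖ := by rw [mul_right_comm M]; gcongr

theorem mul_norm_derivVelocity_le (b : V →ₗ[ℝ] V →ₗ[ℝ] V →ₗ[ℝ] ℝ)
    (hb0 : ∀ u v : V, b u v v = 0) {M : ℝ}
    (hb : ∀ u v w : V, |b u v w| ≤ M * ‖u‖ * ‖v‖ * ‖w‖) (hM : 0 ≤ M)
    (c : W →ₗ[ℝ] V →ₗ[ℝ] ℝ) {CP : ℝ} (hc : ∀ (θ : W) (v : V), |c θ v| ≤ CP ^ 2 * ‖θ‖ * ‖v‖)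
    {ν κ Ri K₁ K₂ : ℝ} (hRi : 0 ≤ Ri) (hRiCP : Ri * CP ^ 2 ≤ κ) {u h ũ g₁ : V} {g₂ : W}
    (hũ : ‖ũ‖ ≤ K₁) (hg₂ : κ * ‖g₂‖ ≤ M * K₂ * ‖h‖)
    (heq : ∀ v : V, b h ũ v + b u g₁ v + ν * ⟪g₁, v⟫ = Ri * c g₂ v) :
    ν * ‖g₁‖ ≤ M * (K₁ + K₂) * ‖h‖ := by
  have hK₁ : 0 ≤ K₁ := (norm_nonneg ũ).trans hũ
  have hκ : 0 ≤ κ := (mul_nonneg hRi (sq_nonneg CP)).trans hRiCP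
  have hK₂ : 0 ≤ M * K₂ * ‖h‖ := (mul_nonneg hκ (norm_nonneg g₂)).trans hg₂
  have hbuoy : Ri * c g₂ g₁ ≤ M * K₂ * ‖h‖ * ‖g₁‖ := by
    calc Ri * c g₂ g₁ ≤ Ri * (CP ^ 2 * ‖g₂‖ * ‖g₁‖) :=
          mul_le_mul_of_nonneg_left ((le_abs_self _).trans (hc g₂ g₁)) hRi
      _ = Ri * CP ^ 2 * ‖g₂‖ * ‖g₁‖ := by ring
      _ ≤ κ * ‖g₂‖ * ‖g₁‖ := by gcongr
      _ ≤ M * K₂ * ‖h‖ * ‖g₁‖ := by gcongr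
  have hadv : -b h ũ g₁ ≤ M * K₁ * ‖h‖ * ‖g₁‖ := by
    calc -b h ũ g₁ ≤ M * ‖h‖ * ‖ũ‖ * ‖g₁‖ := (neg_le_abs _).trans (hb h ũ g₁)
      _ ≤ M * K₁ * ‖h‖ * ‖g₁‖ := by rw [mul_right_comm M]; gcongr
  refine mul_norm_le_of_skew_test (b u · ·) (hb0 u)
    (by rw [mul_add, add_mul]; exact add_nonneg (by positivity) hK₂) (r := Ri * c g₂ g₁ - b h ũ g₁) (by linarith [heq g₁]) ?_
  linarith

section WeightedSquares

theorem mul_sq_le_inv_mul_sq {a η x C : ℝ} (hη : 0 < η) (hηa : η ≤ a) (hx : 0 ≤ x)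
    (h : a * x ≤ C) : a * x ^ 2 ≤ η⁻¹ * C ^ 2 := by
  have ha : 0 < a := hη.trans_le hηa
  calc a * x ^ 2 = a⁻¹ * (a * x) ^ 2 := by field_simp
    _ ≤ η⁻¹ * C ^ 2 := by gcongr

theorem weighted_sq_le {ν κ M K₁ K₂ x y t : ℝ} (hν : 0 < ν) (hκ : 0 < κ) (hx : 0 ≤ x)
    (hy : 0 ≤ y) (hνx : ν * x ≤ M * (K₁ + K₂) * t) (hκy : κ * y ≤ M * K₂ * t) :
    ν * x ^ 2 + κ * y ^ 2 ≤ (min ν κ)⁻¹ * (M ^ 2 * (2 * K₁ ^ 2 + 3 * K₂ ^ 2) * t ^ 2) := by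
  have hη : 0 < min ν κ := lt_min hν hκ
  have hx2 := mul_sq_le_inv_mul_sq hη (min_le_left ν κ) hx hνx
  have hy2 := mul_sq_le_inv_mul_sq hη (min_le_right ν κ) hy hκy
  have hsum : (K₁ + K₂) ^ 2 + K₂ ^ 2 ≤ 2 * K₁ ^ 2 + 3 * K₂ ^ 2 := by
    nlinarith [sq_nonneg (K₁ - K₂)]
  calc ν * x ^ 2 + κ * y ^ 2
      ≤ (min ν κ)⁻¹ * (M * (K₁ + K₂) * t) ^ 2 + (min ν κ)⁻¹ * (M * K₂ * t) ^ 2 :=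
        add_le_add hx2 hy2
    _ = (min ν κ)⁻¹ * (M ^ 2 * ((K₁ + K₂) ^ 2 + K₂ ^ 2) * t ^ 2) := by ring
    _ ≤ (min ν κ)⁻¹ * (M ^ 2 * (2 * K₁ ^ 2 + 3 * K₂ ^ 2) * t ^ 2) := by gcongr

theorem sqrt_weighted_sq_le {ν κ M K₁ K₂ x y t r : ℝ} (hν : 0 < ν) (hκ : 0 < κ) (hM : 0 ≤ M)
    (hx : 0 ≤ x) (hy : 0 ≤ y) (hνx : ν * x ≤ M * (K₁ + K₂) * t) (hκy : κ * y ≤ M * K₂ * t) :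
    √(ν * x ^ 2 + κ * y ^ 2) ≤ (√ν)⁻¹ * (√(min ν κ))⁻¹ * M * √(2 * K₁ ^ 2 + 3 * K₂ ^ 2) *
      √(ν * t ^ 2 + κ * r ^ 2) := by
  have ht : t ^ 2 ≤ ν⁻¹ * (ν * t ^ 2 + κ * r ^ 2) := by
    rw [le_inv_mul_iff₀ hν]
    nlinarith [sq_nonneg r]
  calc √(ν * x ^ 2 + κ * y ^ 2)
      ≤ √((min ν κ)⁻¹ * (M ^ 2 * (2 * K₁ ^ 2 + 3 * K₂ ^ 2) * (ν⁻¹ * (ν * t ^ 2 + κ * r ^ 2)))) := by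
        refine Real.sqrt_le_sqrt ((weighted_sq_le hν hκ hx hy hνx hκy).trans ?_)
        gcongr
    _ = (√ν)⁻¹ * (√(min ν κ))⁻¹ * M * √(2 * K₁ ^ 2 + 3 * K₂ ^ 2) *
          √(ν * t ^ 2 + κ * r ^ 2) := by
        rw [Real.sqrt_mul (by positivity), Real.sqrt_mul (by positivity),
          Real.sqrt_mul (sq_nonneg M), Real.sqrt_mul (by positivity), Real.sqrt_inv, Real.sqrt_inv, Real.sqrt_sq hM]
        ring

end WeightedSquares

theorem derivative_uniform_bound_Bnorm_general
    {V W : Type*} [NormedAddCommGroup V] [InnerProductSpace ℝ V]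
    [NormedAddCommGroup W] [InnerProductSpace ℝ W]
    (ν κ Ri M CP : ℝ) (hν : 0 < ν) (hκ : 0 < κ) (hRi : 0 < Ri) (hM : 0 < M)
    (b : V →ₗ[ℝ] V →ₗ[ℝ] V →ₗ[ℝ] ℝ)
    (hb0 : ∀ u v : V, b u v v = 0)
    (hb : ∀ u v w : V, |b u v w| ≤ M * ‖u‖ * ‖v‖ * ‖w‖)
    (bs : V →ₗ[ℝ] W →ₗ[ℝ] W →ₗ[ℝ] ℝ)
    (hbs0 : ∀ (u : V) (φ : W), bs u φ φ = 0)
    (hbs : ∀ (u : V) (φ ψ : W), |bs u φ ψ| ≤ M * ‖u‖ * ‖φ‖ * ‖ψ‖)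
    (c : W →ₗ[ℝ] V →ₗ[ℝ] ℝ)
    (hc : ∀ (θ : W) (v : V), |c θ v| ≤ CP ^ 2 * ‖θ‖ * ‖v‖)
    (f : V →L[ℝ] ℝ) (γ : W →L[ℝ] ℝ)
    (G₁ : V → W → V) (G₂ : V → W → W)
    (hG : ∀ (u : V) (θ : W),
      (∀ v : V, b u (G₁ u θ) v + ν * ⟪G₁ u θ, v⟫ = Ri * c (G₂ u θ) v + f v) ∧
      (∀ χ : W, bs u (G₂ u θ) χ + κ * ⟪G₂ u θ, χ⟫ = γ χ))
    (G₁' : V → W → V → W → V) (G₂' : V → W → V → W → W)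
    (hG' : ∀ (u : V) (θ : W) (h : V) (s : W),
      (∀ v : V, b h (G₁ u θ) v + b u (G₁' u θ h s) v + ν * ⟪G₁' u θ h s, v⟫
          = Ri * c (G₂' u θ h s) v) ∧
      (∀ χ : W, bs h (G₂ u θ) χ + bs u (G₂' u θ h s) χ + κ * ⟪G₂' u θ h s, χ⟫ = 0))
    (hsd2 : (min ν κ)⁻¹ * Ri * CP ^ 2 < 1)
    (u h : V) (θ s : W) :
    Real.sqrt (ν * ‖G₁' u θ h s‖ ^ 2 + κ * ‖G₂' u θ h s‖ ^ 2)
      ≤ ((Real.sqrt ν)⁻¹ * (Real.sqrt (min ν κ))⁻¹ * M * Real.sqrt (2 * (Ri * CP ^ 2 * ν⁻¹ * κ⁻¹ * ‖γ‖ + ν⁻¹ * ‖f‖) ^ 2 + 3 * (κ⁻¹ * ‖γ‖) ^ 2)) * Real.sqrt (ν * ‖h‖ ^ 2 + κ * ‖s‖ ^ 2) := by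
  have hRiCP : Ri * CP ^ 2 ≤ κ := by
    have hη : 0 < min ν κ := lt_min hν hκ
    have := (inv_mul_lt_iff₀ hη).1 (by simpa only [mul_assoc] using hsd2)
    linarith [min_le_right ν κ]
  have hθ := norm_temperature_le bs hbs0 γ hκ (hG u θ).2
  have hu : ‖G₁ u θ‖ ≤ Ri * CP ^ 2 * ν⁻¹ * κ⁻¹ * ‖γ‖ + ν⁻¹ * ‖f‖ :=
    (norm_velocity_le b hb0 c hc f hν hRi.le hθ (hG u θ).1).trans_eq (by ring)
  have hg₂ := mul_norm_derivTemperature_le bs hbs0 hbs hM.le hθ (hG' u θ h s).2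
  have hg₁ := mul_norm_derivVelocity_le b hb0 hb hM.le c hc hRi.le hRiCP hu hg₂ (hG' u θ h s).1
  exact sqrt_weighted_sq_le hν hκ hM.le (norm_nonneg _) (norm_nonneg _) hg₁ hg₂

/-- Lemma 3.5 (uniform bound on `G'`): `‖G'(u,θ;h,s)‖_B ≤ C_G ‖(h,s)‖_B`. -/
theorem derivative_uniform_bound_Bnorm
    {V W : Type*} [NormedAddCommGroup V] [InnerProductSpace ℝ V] [FiniteDimensional ℝ V]
    [NormedAddCommGroup W] [InnerProductSpace ℝ W] [FiniteDimensional ℝ W]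
    (ν κ Ri M CP : ℝ) (hν : 0 < ν) (hκ : 0 < κ) (hRi : 0 < Ri) (hM : 0 < M) (hCP : 0 < CP)
    (b : V →ₗ[ℝ] V →ₗ[ℝ] V →ₗ[ℝ] ℝ)
    (hb0 : ∀ u v : V, b u v v = 0)
    (hb : ∀ u v w : V, |b u v w| ≤ M * ‖u‖ * ‖v‖ * ‖w‖)
    (bs : V →ₗ[ℝ] W →ₗ[ℝ] W →ₗ[ℝ] ℝ)
    (hbs0 : ∀ (u : V) (φ : W), bs u φ φ = 0)
    (hbs : ∀ (u : V) (φ ψ : W), |bs u φ ψ| ≤ M * ‖u‖ * ‖φ‖ * ‖ψ‖)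
    (c : W →ₗ[ℝ] V →ₗ[ℝ] ℝ)
    (hc : ∀ (θ : W) (v : V), |c θ v| ≤ CP ^ 2 * ‖θ‖ * ‖v‖)
    (f : V →L[ℝ] ℝ) (γ : W →L[ℝ] ℝ)
    (G₁ : V → W → V) (G₂ : V → W → W)
    (hG : ∀ (u : V) (θ : W),
      (∀ v : V, b u (G₁ u θ) v + ν * ⟪G₁ u θ, v⟫ = Ri * c (G₂ u θ) v + f v) ∧
      (∀ χ : W, bs u (G₂ u θ) χ + κ * ⟪G₂ u θ, χ⟫ = γ χ))
    (G₁' : V → W → V → W → V) (G₂' : V → W → V → W → W)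
    (hG' : ∀ (u : V) (θ : W) (h : V) (s : W),
      (∀ v : V, b h (G₁ u θ) v + b u (G₁' u θ h s) v + ν * ⟪G₁' u θ h s, v⟫
          = Ri * c (G₂' u θ h s) v) ∧
      (∀ χ : W, bs h (G₂ u θ) χ + bs u (G₂' u θ h s) χ + κ * ⟪G₂' u θ h s, χ⟫ = 0))
    (hsd1 : (min ν κ)⁻¹ ^ 2 * M *
        (2 * (Ri * CP ^ 2 * κ⁻¹ * ‖γ‖ + ‖f‖) + κ⁻¹ ^ 2 * M * ‖γ‖ ^ 2) < 1)
    (hsd2 : (min ν κ)⁻¹ * Ri * CP ^ 2 < 1)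
    (u h : V) (θ s : W) :
    Real.sqrt (ν * ‖G₁' u θ h s‖ ^ 2 + κ * ‖G₂' u θ h s‖ ^ 2)
      ≤ ((Real.sqrt ν)⁻¹ * (Real.sqrt (min ν κ))⁻¹ * M * Real.sqrt (2 * (Ri * CP ^ 2 * ν⁻¹ * κ⁻¹ * ‖γ‖ + ν⁻¹ * ‖f‖) ^ 2 + 3 * (κ⁻¹ * ‖γ‖) ^ 2)) * Real.sqrt (ν * ‖h‖ ^ 2 + κ * ‖s‖ ^ 2) :=
  derivative_uniform_bound_Bnorm_general ν κ Ri M CP hν hκ hRi hM b hb0 hb bs hbs0 hbs c hc f γ G₁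
    G₂ hG G₁' G₂' hG' hsd2 u h θ s
end EnergyEstimates
end

section
/- (Lemma 3.5, Fréchet differentiability with quadratic remainder.) Assume the small data condition. Then for every (u,θ), (h,s) ∈ V × W, ‖G(u+h, θ+s) − G(u,θ) − G'(u,θ;h,s)‖_B ≤ 2 η^{-3/2} M C_G ‖(h,s)‖_B², where C_G = ν^{-1/2} η^{-1/2} M (2K₁² + 3K₂²)^{1/2}. In particular, G is Fréchet differentiable at every point of V × W with derivative G'(u,θ;·,·). -/
open scoped RealInnerProductSpace

/-!
Put `d = G(u+h,θ+s) - G(u,θ)` and `r = d - G'(u,θ;h,s)`. Subtracting defining equations shows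
that `G'(u,θ;h,s)`, `d` and `r` solve one and the same linear system at `u`, forced by the
transport terms `b(h,y,·)`, `b*(h,y,·)` of a source `y`, namely `G(u,θ)`, `G(u+h,θ+s)` and `d`.
Testing this system with its solution kills the skew terms, and the buoyancy coupling is absorbed
since `(Ri C_P²)² ≤ νκ` by the small data condition; so the B-energy of a solution is at most
`M²‖h‖²` times a weighted energy of its source. For `d` the source is bounded a priori by
`K₁, K₂`; applying the estimate to `d` and then to `r` gives `‖r‖_B² = O(‖h‖⁴)`. For `h = 0` the
same estimate gives uniqueness, hence linearity of `G'(u,θ;·,·)`, and with source `G(u,θ)` it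
bounds `G'(u,θ;·,·)`.
-/

theorem inv_le_inv_sq_mul {η ν : ℝ} (hη : 0 < η) (h : η ≤ ν) : ν⁻¹ ≤ η⁻¹ ^ 2 * ν := by
  have hν : 0 < ν := hη.trans_le h
  calc ν⁻¹ = (ν ^ 2)⁻¹ * ν := by field_simp
    _ ≤ (η ^ 2)⁻¹ * ν := by gcongr
    _ = η⁻¹ ^ 2 * ν := by rw [inv_pow]

theorem sq_le_mul_of_le_min {ν κ p : ℝ} (hp : 0 ≤ p) (h : p ≤ min ν κ) : p ^ 2 ≤ ν * κ := by
  have hν := h.trans (min_le_left ν κ)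
  rw [sq]
  exact mul_le_mul hν (h.trans (min_le_right ν κ)) hp (hp.trans hν)

theorem weighted_sq_add_le {ν κ p a₁ a₂ Y₁ Y₂ : ℝ} (hν : 0 < ν) (hκ : 0 < κ)
    (hp : p ^ 2 ≤ ν * κ) (ha₁ : 0 ≤ a₁) (ha₂ : 0 ≤ a₂)
    (h₁ : ν * a₁ ≤ p * a₂ + Y₁) (h₂ : κ * a₂ ≤ Y₂) :
    ν * a₁ ^ 2 + κ * a₂ ^ 2 ≤ 2 * ν⁻¹ * Y₁ ^ 2 + 3 * κ⁻¹ * Y₂ ^ 2 := by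
  have hq : (ν * a₁) ^ 2 ≤ (p * a₂ + Y₁) ^ 2 := pow_le_pow_left₀ (by positivity) h₁ 2
  have hY : (κ * a₂) ^ 2 ≤ Y₂ ^ 2 := pow_le_pow_left₀ (by positivity) h₂ 2
  have hsplit : (p * a₂ + Y₁) ^ 2 ≤ 2 * ν * κ * a₂ ^ 2 + 2 * Y₁ ^ 2 := by
    nlinarith [sq_nonneg (p * a₂ - Y₁), mul_le_mul_of_nonneg_right hp (sq_nonneg a₂)]
  calc ν * a₁ ^ 2 + κ * a₂ ^ 2 = ν⁻¹ * (ν * a₁) ^ 2 + κ * a₂ ^ 2 := by field_simp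
    _ ≤ ν⁻¹ * (2 * ν * κ * a₂ ^ 2 + 2 * Y₁ ^ 2) + κ * a₂ ^ 2 := by
      gcongr
      exact hq.trans hsplit
    _ = 2 * ν⁻¹ * Y₁ ^ 2 + 3 * κ⁻¹ * (κ * a₂) ^ 2 := by field_simp; ring
    _ ≤ 2 * ν⁻¹ * Y₁ ^ 2 + 3 * κ⁻¹ * Y₂ ^ 2 := by gcongr

theorem weighted_inv_sq_add_le {ν κ a b : ℝ} (hν : 0 < ν) (hκ : 0 < κ) :
    2 * ν⁻¹ * a ^ 2 + 3 * κ⁻¹ * b ^ 2 ≤ 3 * (min ν κ)⁻¹ ^ 2 * (ν * a ^ 2 + κ * b ^ 2) := by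
  have hη : 0 < min ν κ := lt_min hν hκ
  have hν' := inv_le_inv_sq_mul hη (min_le_left ν κ)
  have hκ' := inv_le_inv_sq_mul hη (min_le_right ν κ)
  have : 0 ≤ ν⁻¹ * a ^ 2 := by positivity
  nlinarith [mul_le_mul_of_nonneg_right hν' (sq_nonneg a),
    mul_le_mul_of_nonneg_right hκ' (sq_nonneg b)]

theorem sqrt_le_of_le_mul_pow_four {ν κ M S X a B : ℝ} (hν : 0 < ν) (hκ : 0 < κ) (hS : 0 ≤ S)
    (hX : X ≤ 3 * (min ν κ)⁻¹ ^ 3 * M ^ 4 * S * a ^ 4) (ha : ν * a ^ 2 ≤ B) :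
    √X ≤ 2 * (min ν κ)⁻¹ * (√(min ν κ))⁻¹ * M * ((√ν)⁻¹ * (√(min ν κ))⁻¹ * M * √S) * √B ^ 2 := by
  set η := min ν κ
  have hη : 0 < η := lt_min hν hκ
  have hB : 0 ≤ B := (by positivity : 0 ≤ ν * a ^ 2).trans ha
  have hsqrtη : (√η)⁻¹ * (√η)⁻¹ = η⁻¹ := by rw [← mul_inv, Real.mul_self_sqrt hη.le]
  have hrhs : 2 * η⁻¹ * (√η)⁻¹ * M * ((√ν)⁻¹ * (√η)⁻¹ * M * √S) * √B ^ 2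
      = 2 * M ^ 2 * η⁻¹ ^ 2 * (√ν)⁻¹ * √S * B := by
    rw [Real.sq_sqrt hB]
    linear_combination (2 * η⁻¹ * M ^ 2 * (√ν)⁻¹ * √S * B) * hsqrtη
  rw [hrhs, Real.sqrt_le_left (by positivity)]
  have hsq : (2 * M ^ 2 * η⁻¹ ^ 2 * (√ν)⁻¹ * √S * B) ^ 2
      = 4 * M ^ 4 * η⁻¹ ^ 4 * ν⁻¹ * S * B ^ 2 := by
    rw [mul_pow, mul_pow, mul_pow, mul_pow, mul_pow, inv_pow (√ν), Real.sq_sqrt hν.le,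
      Real.sq_sqrt hS]
    ring
  have ha4 : a ^ 4 ≤ ν⁻¹ * η⁻¹ * B ^ 2 := by
    have h1 : (ν * a ^ 2) ^ 2 ≤ B ^ 2 := pow_le_pow_left₀ (by positivity) ha 2
    have h2 : ν⁻¹ ≤ η⁻¹ := inv_anti₀ hη (min_le_left ν κ)
    calc a ^ 4 = ν⁻¹ * ν⁻¹ * (ν * a ^ 2) ^ 2 := by field_simp
      _ ≤ ν⁻¹ * η⁻¹ * B ^ 2 := by gcongr
  rw [hsq]
  calc X ≤ 3 * η⁻¹ ^ 3 * M ^ 4 * S * a ^ 4 := hX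
    _ ≤ 3 * η⁻¹ ^ 3 * M ^ 4 * S * (ν⁻¹ * η⁻¹ * B ^ 2) := by gcongr
    _ ≤ 4 * M ^ 4 * η⁻¹ ^ 4 * ν⁻¹ * S * B ^ 2 := by
      have : 0 ≤ M ^ 4 * η⁻¹ ^ 4 * ν⁻¹ * S * B ^ 2 := by positivity
      linarith

section Product

variable {E F : Type*} [SeminormedAddCommGroup E] [SeminormedAddCommGroup F]

theorem min_mul_norm_sq_le (x : E × F) {ν κ : ℝ} (hν : 0 ≤ ν) (hκ : 0 ≤ κ) :
    min ν κ * ‖x‖ ^ 2 ≤ ν * ‖x.1‖ ^ 2 + κ * ‖x.2‖ ^ 2 := by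
  rw [Prod.norm_def]
  rcases le_total ‖x.1‖ ‖x.2‖ with h | h
  · rw [max_eq_right h]
    nlinarith [min_le_right ν κ, sq_nonneg ‖x.2‖, mul_nonneg hν (sq_nonneg ‖x.1‖)]
  · rw [max_eq_left h]
    nlinarith [min_le_left ν κ, sq_nonneg ‖x.1‖, mul_nonneg hκ (sq_nonneg ‖x.2‖)]

theorem norm_le_of_weighted_sq_le (x : E × F) {ν κ C t : ℝ} (hν : 0 < ν) (hκ : 0 < κ)
    (ht : 0 ≤ t) (h : ν * ‖x.1‖ ^ 2 + κ * ‖x.2‖ ^ 2 ≤ C * t ^ 2) :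
    ‖x‖ ≤ √((min ν κ)⁻¹ * C) * t := by
  have hη : 0 < min ν κ := lt_min hν hκ
  have hx : ‖x‖ ^ 2 ≤ (min ν κ)⁻¹ * C * t ^ 2 := by
    rw [mul_assoc, le_inv_mul_iff₀ hη]
    exact (min_mul_norm_sq_le x hν.le hκ.le).trans h
  calc ‖x‖ ≤ √((min ν κ)⁻¹ * C * t ^ 2) := Real.le_sqrt_of_sq_le hx
    _ = √((min ν κ)⁻¹ * C) * t := by rw [Real.sqrt_mul' _ (sq_nonneg t), Real.sqrt_sq ht]

end Product

theorem hasFDerivAt_of_norm_sub_le_mul_sq {𝕜 E F : Type*} [NontriviallyNormedField 𝕜]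
    [NormedAddCommGroup E] [NormedSpace 𝕜 E] [NormedAddCommGroup F] [NormedSpace 𝕜 F]
    {f : E → F} {f' : E →L[𝕜] F} {x : E} {C : ℝ}
    (h : ∀ p, ‖f (x + p) - f x - f' p‖ ≤ C * ‖p‖ ^ 2) : HasFDerivAt f f' x := by
  rw [hasFDerivAt_iff_isLittleO_nhds_zero]
  refine (Asymptotics.IsBigO.of_bound C (Filter.Eventually.of_forall fun p => ?_)).trans_isLittleO
    (Asymptotics.isLittleO_norm_pow_id one_lt_two)
  rw [norm_pow, norm_norm]
  exact h p

theorem mul_norm_le_of_skew_add_inner_eq {E : Type*} [NormedAddCommGroup E]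
    [InnerProductSpace ℝ E] {β : E →ₗ[ℝ] E →ₗ[ℝ] ℝ} {F : E → ℝ} {ν A : ℝ} {x : E}
    (hA : 0 ≤ A) (hskew : β x x = 0) (heq : ∀ v, β x v + ν * ⟪x, v⟫ = F v)
    (hF : F x ≤ A * ‖x‖) : ν * ‖x‖ ≤ A := by
  have energy : ν * ‖x‖ ^ 2 ≤ A * ‖x‖ := by
    rw [← real_inner_self_eq_norm_sq, ← zero_add (ν * _), ← hskew, heq]
    exact hF
  rcases (norm_nonneg x).eq_or_lt with h0 | h0
  · rw [← h0, mul_zero]; exact hA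
  · nlinarith

section Boussinesq

variable {V W : Type*} [NormedAddCommGroup V] [InnerProductSpace ℝ V]
  [NormedAddCommGroup W] [InnerProductSpace ℝ W]
  {b : V →ₗ[ℝ] V →ₗ[ℝ] V →ₗ[ℝ] ℝ} {bs : V →ₗ[ℝ] W →ₗ[ℝ] W →ₗ[ℝ] ℝ} {c : W →ₗ[ℝ] V →ₗ[ℝ] ℝ}
  {ν κ Ri M CP : ℝ}

variable (b bs c M CP) in
structure BoussinesqForms : Prop where
  b_skew : ∀ u v : V, b u v v = 0
  b_bound : ∀ u v w : V, |b u v w| ≤ M * ‖u‖ * ‖v‖ * ‖w‖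
  bs_skew : ∀ (u : V) (φ : W), bs u φ φ = 0
  bs_bound : ∀ (u : V) (φ ψ : W), |bs u φ ψ| ≤ M * ‖u‖ * ‖φ‖ * ‖ψ‖
  c_bound : ∀ (θ : W) (v : V), |c θ v| ≤ CP ^ 2 * ‖θ‖ * ‖v‖

variable (b bs c) in
def LinearizedSystem (f : V →L[ℝ] ℝ) (γ : W →L[ℝ] ℝ) (ν κ Ri : ℝ) (u : V) (p : V × W) : Prop :=
  (∀ v : V, b u p.1 v + ν * ⟪p.1, v⟫ = Ri * c p.2 v + f v) ∧
  (∀ χ : W, bs u p.2 χ + κ * ⟪p.2, χ⟫ = γ χ)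

variable (b bs c) in
def DerivativeSystem (ν κ Ri : ℝ) (u h : V) (y x : V × W) : Prop :=
  (∀ v : V, b h y.1 v + b u x.1 v + ν * ⟪x.1, v⟫ = Ri * c x.2 v) ∧
  (∀ χ : W, bs h y.2 χ + bs u x.2 χ + κ * ⟪x.2, χ⟫ = 0)

namespace LinearizedSystem

variable {f : V →L[ℝ] ℝ} {γ : W →L[ℝ] ℝ} {u : V} {p : V × W}

theorem mul_norm_snd_le (hF : BoussinesqForms b bs c M CP)
    (hp : LinearizedSystem b bs c f γ ν κ Ri u p) : κ * ‖p.2‖ ≤ ‖γ‖ :=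
  mul_norm_le_of_skew_add_inner_eq (norm_nonneg γ) (hF.bs_skew u p.2) hp.2
    ((le_abs_self _).trans (γ.le_opNorm p.2))

theorem mul_norm_fst_le (hRi : 0 ≤ Ri) (hF : BoussinesqForms b bs c M CP)
    (hp : LinearizedSystem b bs c f γ ν κ Ri u p) :
    ν * ‖p.1‖ ≤ Ri * CP ^ 2 * ‖p.2‖ + ‖f‖ := by
  refine mul_norm_le_of_skew_add_inner_eq (by positivity) (hF.b_skew u p.1) hp.1 ?_
  have hcp := mul_le_mul_of_nonneg_left ((le_abs_self _).trans (hF.c_bound p.2 p.1)) hRi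
  have hfp := (le_abs_self _).trans (f.le_opNorm p.1)
  linarith

theorem derivativeSystem_sub {h : V} {p' : V × W}
    (hp' : LinearizedSystem b bs c f γ ν κ Ri (u + h) p')
    (hp : LinearizedSystem b bs c f γ ν κ Ri u p) :
    DerivativeSystem b bs c ν κ Ri u h p' (p' - p) := by
  constructor
  · intro v
    have e' := hp'.1 v
    have e := hp.1 v
    simp only [Prod.fst_sub, Prod.snd_sub, map_add, map_sub, LinearMap.add_apply,
      LinearMap.sub_apply, inner_sub_left] at e' e ⊢
    linarith
  · intro χ
    have e' := hp'.2 χ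
    have e := hp.2 χ
    simp only [Prod.snd_sub, map_add, map_sub, LinearMap.add_apply, LinearMap.sub_apply,
      inner_sub_left] at e' e ⊢
    linarith

theorem weighted_sq_norm_le (hν : 0 < ν) (hκ : 0 < κ) (hRi : 0 ≤ Ri)
    (hF : BoussinesqForms b bs c M CP) (hp : LinearizedSystem b bs c f γ ν κ Ri u p) :
    2 * ν⁻¹ * ‖p.1‖ ^ 2 + 3 * κ⁻¹ * ‖p.2‖ ^ 2 ≤ (min ν κ)⁻¹ *
      (2 * (Ri * CP ^ 2 * ν⁻¹ * κ⁻¹ * ‖γ‖ + ν⁻¹ * ‖f‖) ^ 2 + 3 * (κ⁻¹ * ‖γ‖) ^ 2) := by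
  have hη : 0 < min ν κ := lt_min hν hκ
  have h₂ : ‖p.2‖ ≤ κ⁻¹ * ‖γ‖ := (le_inv_mul_iff₀ hκ).mpr (hp.mul_norm_snd_le hF)
  have h₁ : ‖p.1‖ ≤ Ri * CP ^ 2 * ν⁻¹ * κ⁻¹ * ‖γ‖ + ν⁻¹ * ‖f‖ := by
    have := (le_inv_mul_iff₀ hν).mpr ((hp.mul_norm_fst_le hRi hF).trans
      (by gcongr : _ ≤ Ri * CP ^ 2 * (κ⁻¹ * ‖γ‖) + ‖f‖))
    exact this.trans_eq (by ring)
  have hν' : ν⁻¹ ≤ (min ν κ)⁻¹ := inv_anti₀ hη (min_le_left ν κ)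
  have hκ' : κ⁻¹ ≤ (min ν κ)⁻¹ := inv_anti₀ hη (min_le_right ν κ)
  calc 2 * ν⁻¹ * ‖p.1‖ ^ 2 + 3 * κ⁻¹ * ‖p.2‖ ^ 2
      ≤ 2 * (min ν κ)⁻¹ * (Ri * CP ^ 2 * ν⁻¹ * κ⁻¹ * ‖γ‖ + ν⁻¹ * ‖f‖) ^ 2
        + 3 * (min ν κ)⁻¹ * (κ⁻¹ * ‖γ‖) ^ 2 := by gcongr
    _ = _ := by ring

end LinearizedSystem

namespace DerivativeSystem

variable {u h : V} {y x : V × W}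

theorem sub {y' x' : V × W} (hx : DerivativeSystem b bs c ν κ Ri u h y x)
    (hx' : DerivativeSystem b bs c ν κ Ri u h y' x') :
    DerivativeSystem b bs c ν κ Ri u h (y - y') (x - x') := by
  constructor
  · intro v
    have e := hx.1 v
    have e' := hx'.1 v
    simp only [Prod.fst_sub, Prod.snd_sub, map_sub, LinearMap.sub_apply,
      inner_sub_left] at e e' ⊢
    linarith
  · intro χ
    have e := hx.2 χ
    have e' := hx'.2 χ
    simp only [Prod.snd_sub, map_sub, LinearMap.sub_apply, inner_sub_left] at e e' ⊢
    linarith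

theorem add {h' : V} {x' : V × W} (hx : DerivativeSystem b bs c ν κ Ri u h y x)
    (hx' : DerivativeSystem b bs c ν κ Ri u h' y x') :
    DerivativeSystem b bs c ν κ Ri u (h + h') y (x + x') := by
  constructor
  · intro v
    have e := hx.1 v
    have e' := hx'.1 v
    simp only [Prod.fst_add, Prod.snd_add, map_add, LinearMap.add_apply,
      inner_add_left] at e e' ⊢
    linarith
  · intro χ
    have e := hx.2 χ
    have e' := hx'.2 χ
    simp only [Prod.snd_add, map_add, LinearMap.add_apply, inner_add_left] at e e' ⊢
    linarith

theorem smul (r : ℝ) (hx : DerivativeSystem b bs c ν κ Ri u h y x) :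
    DerivativeSystem b bs c ν κ Ri u (r • h) y (r • x) := by
  constructor
  · intro v
    have e := congrArg (r * ·) (hx.1 v)
    simp only [Prod.smul_fst, Prod.smul_snd, map_smul, LinearMap.smul_apply,
      real_inner_smul_left, smul_eq_mul] at e ⊢
    linarith
  · intro χ
    have e := congrArg (r * ·) (hx.2 χ)
    simp only [Prod.smul_snd, map_smul, LinearMap.smul_apply, real_inner_smul_left,
      smul_eq_mul, mul_zero] at e ⊢
    linarith

theorem mul_norm_snd_le (hM : 0 ≤ M) (hF : BoussinesqForms b bs c M CP)
    (hx : DerivativeSystem b bs c ν κ Ri u h y x) : κ * ‖x.2‖ ≤ M * ‖h‖ * ‖y.2‖ := by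
  refine mul_norm_le_of_skew_add_inner_eq (F := fun χ => -bs h y.2 χ) (by positivity)
    (hF.bs_skew u x.2) (fun χ => by linarith [hx.2 χ]) ?_
  linarith [neg_abs_le (bs h y.2 x.2), hF.bs_bound h y.2 x.2]

theorem mul_norm_fst_le (hRi : 0 ≤ Ri) (hM : 0 ≤ M) (hF : BoussinesqForms b bs c M CP)
    (hx : DerivativeSystem b bs c ν κ Ri u h y x) :
    ν * ‖x.1‖ ≤ Ri * CP ^ 2 * ‖x.2‖ + M * ‖h‖ * ‖y.1‖ := by
  refine mul_norm_le_of_skew_add_inner_eq (F := fun v => Ri * c x.2 v - b h y.1 v)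
    (by positivity) (hF.b_skew u x.1) (fun v => by linarith [hx.1 v]) ?_
  have hcx := mul_le_mul_of_nonneg_left ((le_abs_self _).trans (hF.c_bound x.2 x.1)) hRi
  linarith [neg_abs_le (b h y.1 x.1), hF.b_bound h y.1 x.1]

theorem energy_le (hν : 0 < ν) (hκ : 0 < κ) (hRi : 0 ≤ Ri) (hM : 0 ≤ M)
    (hRC : (Ri * CP ^ 2) ^ 2 ≤ ν * κ) (hF : BoussinesqForms b bs c M CP)
    (hx : DerivativeSystem b bs c ν κ Ri u h y x) :
    ν * ‖x.1‖ ^ 2 + κ * ‖x.2‖ ^ 2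
      ≤ (M * ‖h‖) ^ 2 * (2 * ν⁻¹ * ‖y.1‖ ^ 2 + 3 * κ⁻¹ * ‖y.2‖ ^ 2) := by
  have := weighted_sq_add_le hν hκ hRC (norm_nonneg _) (norm_nonneg _)
    (hx.mul_norm_fst_le hRi hM hF) (hx.mul_norm_snd_le hM hF)
  linarith

theorem unique (hν : 0 < ν) (hκ : 0 < κ) (hRi : 0 ≤ Ri) (hM : 0 ≤ M)
    (hRC : (Ri * CP ^ 2) ^ 2 ≤ ν * κ) (hF : BoussinesqForms b bs c M CP) {x' : V × W}
    (hx : DerivativeSystem b bs c ν κ Ri u h y x)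
    (hx' : DerivativeSystem b bs c ν κ Ri u h y x') : x = x' := by
  have henergy := (hx.sub hx').energy_le hν hκ hRi hM hRC hF
  simp only [sub_self, Prod.fst_zero, Prod.snd_zero, norm_zero] at henergy
  have hnorm := norm_le_of_weighted_sq_le (x - x') (C := 0) hν hκ le_rfl (by linarith)
  rw [mul_zero] at hnorm
  exact sub_eq_zero.mp (norm_le_zero_iff.mp hnorm)

theorem exists_continuousLinearMap (hν : 0 < ν) (hκ : 0 < κ) (hRi : 0 ≤ Ri) (hM : 0 ≤ M)
    (hRC : (Ri * CP ^ 2) ^ 2 ≤ ν * κ) (hF : BoussinesqForms b bs c M CP) {D : V → W → V × W}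
    (hD : ∀ h s, DerivativeSystem b bs c ν κ Ri u h y (D h s)) :
    ∃ L : V × W →L[ℝ] V × W, ∀ h s, L (h, s) = D h s := by
  let L : V × W →ₗ[ℝ] V × W :=
    { toFun := fun p => D p.1 p.2
      map_add' := fun p q => (hD _ _).unique hν hκ hRi hM hRC hF ((hD p.1 p.2).add (hD q.1 q.2))
      map_smul' := fun r p => (hD _ _).unique hν hκ hRi hM hRC hF ((hD p.1 p.2).smul r) }
  have hbound : ∀ p, ‖L p‖ ≤
      √((min ν κ)⁻¹ * (M ^ 2 * (2 * ν⁻¹ * ‖y.1‖ ^ 2 + 3 * κ⁻¹ * ‖y.2‖ ^ 2))) * ‖p‖ := by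
    intro p
    refine (norm_le_of_weighted_sq_le _ hν hκ (norm_nonneg p.1) ?_).trans
      (by gcongr; exact norm_fst_le p)
    exact ((hD p.1 p.2).energy_le hν hκ hRi hM hRC hF).trans_eq (by ring)
  exact ⟨L.mkContinuous _ hbound, fun h s => rfl⟩

end DerivativeSystem

theorem LinearizedSystem.remainder_energy_le (hν : 0 < ν) (hκ : 0 < κ) (hRi : 0 ≤ Ri)
    (hM : 0 ≤ M) (hRC : (Ri * CP ^ 2) ^ 2 ≤ ν * κ) (hF : BoussinesqForms b bs c M CP)
    {f : V →L[ℝ] ℝ} {γ : W →L[ℝ] ℝ} {u h : V} {p p' x : V × W} {S : ℝ}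
    (hp' : LinearizedSystem b bs c f γ ν κ Ri (u + h) p')
    (hp : LinearizedSystem b bs c f γ ν κ Ri u p)
    (hx : DerivativeSystem b bs c ν κ Ri u h p x)
    (hS : 2 * ν⁻¹ * ‖p'.1‖ ^ 2 + 3 * κ⁻¹ * ‖p'.2‖ ^ 2 ≤ (min ν κ)⁻¹ * S) :
    ν * ‖(p' - p - x).1‖ ^ 2 + κ * ‖(p' - p - x).2‖ ^ 2
      ≤ 3 * (min ν κ)⁻¹ ^ 3 * M ^ 4 * S * ‖h‖ ^ 4 := by
  have hd := hp'.derivativeSystem_sub hp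
  calc _ ≤ (M * ‖h‖) ^ 2 * (2 * ν⁻¹ * ‖(p' - p).1‖ ^ 2 + 3 * κ⁻¹ * ‖(p' - p).2‖ ^ 2) :=
        (hd.sub hx).energy_le hν hκ hRi hM hRC hF
    _ ≤ (M * ‖h‖) ^ 2 *
        (3 * (min ν κ)⁻¹ ^ 2 * (ν * ‖(p' - p).1‖ ^ 2 + κ * ‖(p' - p).2‖ ^ 2)) := by
      gcongr
      exact weighted_inv_sq_add_le hν hκ
    _ ≤ (M * ‖h‖) ^ 2 * (3 * (min ν κ)⁻¹ ^ 2 * ((M * ‖h‖) ^ 2 * ((min ν κ)⁻¹ * S))) := by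
      gcongr
      exact (hd.energy_le hν hκ hRi hM hRC hF).trans (by gcongr)
    _ = _ := by ring

end Boussinesq

theorem solution_operator_frechet_differentiable_general
    {V W : Type*} [NormedAddCommGroup V] [InnerProductSpace ℝ V]
    [NormedAddCommGroup W] [InnerProductSpace ℝ W]
    (ν κ Ri M CP : ℝ) (hν : 0 < ν) (hκ : 0 < κ) (hRi : 0 < Ri) (hM : 0 < M)
    (b : V →ₗ[ℝ] V →ₗ[ℝ] V →ₗ[ℝ] ℝ)
    (hb0 : ∀ u v : V, b u v v = 0)
    (hb : ∀ u v w : V, |b u v w| ≤ M * ‖u‖ * ‖v‖ * ‖w‖)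
    (bs : V →ₗ[ℝ] W →ₗ[ℝ] W →ₗ[ℝ] ℝ)
    (hbs0 : ∀ (u : V) (φ : W), bs u φ φ = 0)
    (hbs : ∀ (u : V) (φ ψ : W), |bs u φ ψ| ≤ M * ‖u‖ * ‖φ‖ * ‖ψ‖)
    (c : W →ₗ[ℝ] V →ₗ[ℝ] ℝ)
    (hc : ∀ (θ : W) (v : V), |c θ v| ≤ CP ^ 2 * ‖θ‖ * ‖v‖)
    (f : V →L[ℝ] ℝ) (γ : W →L[ℝ] ℝ)
    (G₁ : V → W → V) (G₂ : V → W → W)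
    (hG : ∀ (u : V) (θ : W),
      (∀ v : V, b u (G₁ u θ) v + ν * ⟪G₁ u θ, v⟫ = Ri * c (G₂ u θ) v + f v) ∧
      (∀ χ : W, bs u (G₂ u θ) χ + κ * ⟪G₂ u θ, χ⟫ = γ χ))
    (G₁' : V → W → V → W → V) (G₂' : V → W → V → W → W)
    (hG' : ∀ (u : V) (θ : W) (h : V) (s : W),
      (∀ v : V, b h (G₁ u θ) v + b u (G₁' u θ h s) v + ν * ⟪G₁' u θ h s, v⟫
          = Ri * c (G₂' u θ h s) v) ∧
      (∀ χ : W, bs h (G₂ u θ) χ + bs u (G₂' u θ h s) χ + κ * ⟪G₂' u θ h s, χ⟫ = 0))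
    (hsd2 : (min ν κ)⁻¹ * Ri * CP ^ 2 < 1)
 :
    (∀ (u h : V) (θ s : W),
      Real.sqrt (ν * ‖G₁ (u + h) (θ + s) - G₁ u θ - G₁' u θ h s‖ ^ 2
          + κ * ‖G₂ (u + h) (θ + s) - G₂ u θ - G₂' u θ h s‖ ^ 2)
        ≤ 2 * (min ν κ)⁻¹ * (Real.sqrt (min ν κ))⁻¹ * M * ((Real.sqrt ν)⁻¹ * (Real.sqrt (min ν κ))⁻¹ * M * Real.sqrt (2 * (Ri * CP ^ 2 * ν⁻¹ * κ⁻¹ * ‖γ‖ + ν⁻¹ * ‖f‖) ^ 2 + 3 * (κ⁻¹ * ‖γ‖) ^ 2))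
            * Real.sqrt (ν * ‖h‖ ^ 2 + κ * ‖s‖ ^ 2) ^ 2) ∧
    ∀ (u : V) (θ : W), ∃ D : (V × W) →L[ℝ] (V × W),
      (∀ (h : V) (s : W), D (h, s) = (G₁' u θ h s, G₂' u θ h s)) ∧
      HasFDerivAt (fun p : V × W => (G₁ p.1 p.2, G₂ p.1 p.2)) D (u, θ) := by
  have hF : BoussinesqForms b bs c M CP := ⟨hb0, hb, hbs0, hbs, hc⟩
  have hsol : ∀ u θ, LinearizedSystem b bs c f γ ν κ Ri u (G₁ u θ, G₂ u θ) := hG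
  have hder : ∀ u θ h s, DerivativeSystem b bs c ν κ Ri u h (G₁ u θ, G₂ u θ)
      (G₁' u θ h s, G₂' u θ h s) := hG'
  have hRC : (Ri * CP ^ 2) ^ 2 ≤ ν * κ := by
    rw [mul_assoc, inv_mul_lt_iff₀ (lt_min hν hκ), mul_one] at hsd2
    exact sq_le_mul_of_le_min (by positivity) hsd2.le
  set S := 2 * (Ri * CP ^ 2 * ν⁻¹ * κ⁻¹ * ‖γ‖ + ν⁻¹ * ‖f‖) ^ 2 + 3 * (κ⁻¹ * ‖γ‖) ^ 2
  have remainder : ∀ (u h : V) (θ s : W),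
      ν * ‖G₁ (u + h) (θ + s) - G₁ u θ - G₁' u θ h s‖ ^ 2
        + κ * ‖G₂ (u + h) (θ + s) - G₂ u θ - G₂' u θ h s‖ ^ 2
        ≤ 3 * (min ν κ)⁻¹ ^ 3 * M ^ 4 * S * ‖h‖ ^ 4 := fun u h θ s =>
    (hsol (u + h) (θ + s)).remainder_energy_le hν hκ hRi.le hM.le hRC hF (hsol u θ)
      (hder u θ h s) ((hsol (u + h) (θ + s)).weighted_sq_norm_le hν hκ hRi.le hF)
  refine ⟨fun u h θ s => sqrt_le_of_le_mul_pow_four hν hκ (by positivity) (remainder u h θ s)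
    (le_add_of_nonneg_right (by positivity)), fun u θ => ?_⟩
  obtain ⟨D, hD⟩ :=
    DerivativeSystem.exists_continuousLinearMap hν hκ hRi.le hM.le hRC hF (hder u θ)
  refine ⟨D, hD, hasFDerivAt_of_norm_sub_le_mul_sq
    (C := √((min ν κ)⁻¹ * (3 * (min ν κ)⁻¹ ^ 3 * M ^ 4 * S))) fun p => ?_⟩
  rw [show D p = _ from hD p.1 p.2]
  refine (norm_le_of_weighted_sq_le _ (C := 3 * (min ν κ)⁻¹ ^ 3 * M ^ 4 * S) hν hκ
    (sq_nonneg ‖p.1‖) ((remainder u p.1 θ p.2).trans_eq (by ring))).trans ?_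
  gcongr
  exact norm_fst_le p

/-- Lemma 3.5 (Fréchet differentiability with quadratic remainder): the remainder
`G(u+h,θ+s) - G(u,θ) - G'(u,θ;h,s)` is bounded by `2 η^(-3/2) M C_G ‖(h,s)‖_B²`
in the B-norm; in particular `G` is Fréchet differentiable everywhere with
derivative `G'(u,θ;·,·)`. -/
theorem solution_operator_frechet_differentiable
    {V W : Type*} [NormedAddCommGroup V] [InnerProductSpace ℝ V] [FiniteDimensional ℝ V]
    [NormedAddCommGroup W] [InnerProductSpace ℝ W] [FiniteDimensional ℝ W]
    (ν κ Ri M CP : ℝ) (hν : 0 < ν) (hκ : 0 < κ) (hRi : 0 < Ri) (hM : 0 < M) (hCP : 0 < CP)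
    (b : V →ₗ[ℝ] V →ₗ[ℝ] V →ₗ[ℝ] ℝ)
    (hb0 : ∀ u v : V, b u v v = 0)
    (hb : ∀ u v w : V, |b u v w| ≤ M * ‖u‖ * ‖v‖ * ‖w‖)
    (bs : V →ₗ[ℝ] W →ₗ[ℝ] W →ₗ[ℝ] ℝ)
    (hbs0 : ∀ (u : V) (φ : W), bs u φ φ = 0)
    (hbs : ∀ (u : V) (φ ψ : W), |bs u φ ψ| ≤ M * ‖u‖ * ‖φ‖ * ‖ψ‖)
    (c : W →ₗ[ℝ] V →ₗ[ℝ] ℝ)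
    (hc : ∀ (θ : W) (v : V), |c θ v| ≤ CP ^ 2 * ‖θ‖ * ‖v‖)
    (f : V →L[ℝ] ℝ) (γ : W →L[ℝ] ℝ)
    (G₁ : V → W → V) (G₂ : V → W → W)
    (hG : ∀ (u : V) (θ : W),
      (∀ v : V, b u (G₁ u θ) v + ν * ⟪G₁ u θ, v⟫ = Ri * c (G₂ u θ) v + f v) ∧
      (∀ χ : W, bs u (G₂ u θ) χ + κ * ⟪G₂ u θ, χ⟫ = γ χ))
    (G₁' : V → W → V → W → V) (G₂' : V → W → V → W → W)
    (hG' : ∀ (u : V) (θ : W) (h : V) (s : W),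
      (∀ v : V, b h (G₁ u θ) v + b u (G₁' u θ h s) v + ν * ⟪G₁' u θ h s, v⟫
          = Ri * c (G₂' u θ h s) v) ∧
      (∀ χ : W, bs h (G₂ u θ) χ + bs u (G₂' u θ h s) χ + κ * ⟪G₂' u θ h s, χ⟫ = 0))
    (hsd1 : (min ν κ)⁻¹ ^ 2 * M *
        (2 * (Ri * CP ^ 2 * κ⁻¹ * ‖γ‖ + ‖f‖) + κ⁻¹ ^ 2 * M * ‖γ‖ ^ 2) < 1)
    (hsd2 : (min ν κ)⁻¹ * Ri * CP ^ 2 < 1)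
 :
    (∀ (u h : V) (θ s : W),
      Real.sqrt (ν * ‖G₁ (u + h) (θ + s) - G₁ u θ - G₁' u θ h s‖ ^ 2
          + κ * ‖G₂ (u + h) (θ + s) - G₂ u θ - G₂' u θ h s‖ ^ 2)
        ≤ 2 * (min ν κ)⁻¹ * (Real.sqrt (min ν κ))⁻¹ * M * ((Real.sqrt ν)⁻¹ * (Real.sqrt (min ν κ))⁻¹ * M * Real.sqrt (2 * (Ri * CP ^ 2 * ν⁻¹ * κ⁻¹ * ‖γ‖ + ν⁻¹ * ‖f‖) ^ 2 + 3 * (κ⁻¹ * ‖γ‖) ^ 2))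
            * Real.sqrt (ν * ‖h‖ ^ 2 + κ * ‖s‖ ^ 2) ^ 2) ∧
    ∀ (u : V) (θ : W), ∃ D : (V × W) →L[ℝ] (V × W),
      (∀ (h : V) (s : W), D (h, s) = (G₁' u θ h s, G₂' u θ h s)) ∧
      HasFDerivAt (fun p : V × W => (G₁ p.1 p.2, G₂ p.1 p.2)) D (u, θ) :=
  solution_operator_frechet_differentiable_general ν κ Ri M CP hν hκ hRi hM b hb0 hb bs hbs0 hbs c
    hc f γ G₁ G₂ hG G₁' G₂' hG' hsd2
end

section
/- (Componentwise Lipschitz bounds on the derivative.) Assume the small data condition. For all (u,θ), (h,s), (w,z) ∈ V × W, writing e₁ = G₁'(u+h,θ+s;w,z) − G₁'(u,θ;w,z) and e₂ = G₂'(u+h,θ+s;w,z) − G₂'(u,θ;w,z), one has ‖e₂‖_W ≤ 2 M² κ⁻² K₂ ‖w‖_V ‖h‖_V and ‖e₁‖_V ≤ 2 ν⁻¹ η⁻¹ M² (K₁ + 2K₂) ‖w‖_V ‖h‖_V. -/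
open scoped RealInnerProductSpace

/-!
Each of `G₂`, `G₁`, `G₂'`, `G₁'` solves a linear problem `B u x χ + κ ⟪x, χ⟫ = ℓ χ` whose convection
form `B u` vanishes on the diagonal, so testing with `χ = x` gives the energy estimate
`κ ‖x‖ ≤ ‖ℓ‖`. Subtracting the problems at `u + h` and at `u` gives a problem of the same kind for
the increment, with the extra forcing `-B h x₁` of size `M ‖h‖ ‖x₁‖`. Running the estimate through
`G₂`, `G₁`, `G₂'`, `G₁'`, then through the increments of `G` and finally those of `G'`, gives the
bounds; the condition `η⁻¹ Ri C_P² < 1` absorbs the buoyancy coupling into the factor `η⁻¹`.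
-/

theorem norm_le_of_mul_sq_le {E : Type*} [SeminormedAddCommGroup E] {a C : ℝ} (ha : 0 < a)
    (hC : 0 ≤ C) {x : E} (h : a * ‖x‖ ^ 2 ≤ C * ‖x‖) : ‖x‖ ≤ a⁻¹ * C := by
  rcases (norm_nonneg x).eq_or_lt' with hx | hx
  · rw [hx]
    positivity
  · rw [le_inv_mul_iff₀ ha]
    nlinarith

section BoundedForms

variable {E F : Type*} [SeminormedAddCommGroup E] [NormedSpace ℝ E]
  [SeminormedAddCommGroup F] [NormedSpace ℝ F] {c : E →ₗ[ℝ] F →ₗ[ℝ] ℝ} {C r Θ : ℝ} {θ θ₀ θ₁ : E}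

theorem neg_bilinear_le (hc : ∀ θ v, |c θ v| ≤ C * ‖θ‖ * ‖v‖) (hC : 0 ≤ C) (hθ : ‖θ‖ ≤ Θ)
    (v : F) : -c θ v ≤ C * Θ * ‖v‖ :=
  calc -c θ v ≤ C * ‖θ‖ * ‖v‖ := (neg_le_abs _).trans (hc θ v)
    _ ≤ C * Θ * ‖v‖ := by gcongr

theorem mul_bilinear_le (hc : ∀ θ v, |c θ v| ≤ C * ‖θ‖ * ‖v‖) (hC : 0 ≤ C) (hr : 0 ≤ r)
    (hθ : ‖θ‖ ≤ Θ) (v : F) : r * c θ v ≤ r * C * Θ * ‖v‖ :=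
  calc r * c θ v ≤ r * (C * ‖θ‖ * ‖v‖) := by gcongr; exact (le_abs_self _).trans (hc θ v)
    _ ≤ r * C * Θ * ‖v‖ := by rw [← mul_assoc, ← mul_assoc]; gcongr

theorem mul_bilinear_sub_le (hc : ∀ θ v, |c θ v| ≤ C * ‖θ‖ * ‖v‖) (hC : 0 ≤ C) (hr : 0 ≤ r)
    (hθ : ‖θ₁ - θ₀‖ ≤ Θ) (v : F) : r * c θ₁ v - r * c θ₀ v ≤ r * C * Θ * ‖v‖ := by
  rw [← mul_sub, ← LinearMap.map_sub₂]
  exact mul_bilinear_le hc hC hr hθ v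

end BoundedForms

section Oseen

variable {U E : Type*} [SeminormedAddCommGroup U] [NormedSpace ℝ U]
  [NormedAddCommGroup E] [InnerProductSpace ℝ E]

def IsOseenSolution (B : U →ₗ[ℝ] E →ₗ[ℝ] E →ₗ[ℝ] ℝ) (κ : ℝ) (u : U) (ℓ : E → ℝ) (x : E) :
    Prop :=
  ∀ χ, B u x χ + κ * ⟪x, χ⟫ = ℓ χ

namespace IsOseenSolution

variable {B : U →ₗ[ℝ] E →ₗ[ℝ] E →ₗ[ℝ] ℝ} {κ L M X Y : ℝ} {u h w : U} {ℓ ℓ₀ ℓ₁ a : E → ℝ}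
  {x x₀ x₁ y y₀ y₁ : E}

theorem of_add_eq (hx : ∀ χ, a χ + B u x χ + κ * ⟪x, χ⟫ = ℓ χ) :
    IsOseenSolution B κ u (fun χ => ℓ χ - a χ) x :=
  fun χ => by linarith [hx χ]

theorem norm_le (hx : IsOseenSolution B κ u ℓ x) (hB0 : ∀ y, B u y y = 0) (hκ : 0 < κ)
    (hL : 0 ≤ L) (hℓ : ℓ x ≤ L * ‖x‖) : ‖x‖ ≤ κ⁻¹ * L := by
  have hxx := hx x
  rw [hB0, zero_add, real_inner_self_eq_norm_sq] at hxx
  exact norm_le_of_mul_sq_le hκ hL (hxx ▸ hℓ)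

theorem sub (hx₁ : IsOseenSolution B κ (u + h) ℓ₁ x₁) (hx₀ : IsOseenSolution B κ u ℓ₀ x₀) :
    IsOseenSolution B κ u (fun χ => ℓ₁ χ - ℓ₀ χ - B h x₁ χ) (x₁ - x₀) := fun χ => by
  have h₁ := hx₁ χ
  have h₀ := hx₀ χ
  simp only [map_add, map_sub, LinearMap.add_apply, LinearMap.sub_apply, inner_sub_left] at h₁ ⊢
  linarith

theorem norm_sub_le (hx₁ : IsOseenSolution B κ (u + h) ℓ₁ x₁)
    (hx₀ : IsOseenSolution B κ u ℓ₀ x₀) (hB0 : ∀ y, B u y y = 0)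
    (hB : ∀ u x y, |B u x y| ≤ M * ‖u‖ * ‖x‖ * ‖y‖) (hM : 0 ≤ M) (hκ : 0 < κ) (hL : 0 ≤ L)
    (hX : ‖x₁‖ ≤ X) (hℓ : ℓ₁ (x₁ - x₀) - ℓ₀ (x₁ - x₀) ≤ L * ‖x₁ - x₀‖) :
    ‖x₁ - x₀‖ ≤ κ⁻¹ * (L + M * ‖h‖ * X) :=
  (hx₁.sub hx₀).norm_le hB0 hκ (by have := (norm_nonneg x₁).trans hX; positivity) (by
    linarith [neg_bilinear_le (hB h) (by positivity) hX (x₁ - x₀)])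

theorem norm_le_of_add_eq (hx : ∀ χ, B h y χ + B u x χ + κ * ⟪x, χ⟫ = ℓ χ)
    (hB0 : ∀ y, B u y y = 0) (hB : ∀ u x y, |B u x y| ≤ M * ‖u‖ * ‖x‖ * ‖y‖) (hM : 0 ≤ M)
    (hκ : 0 < κ) (hL : 0 ≤ L) (hY : ‖y‖ ≤ Y) (hℓ : ℓ x ≤ L * ‖x‖) :
    ‖x‖ ≤ κ⁻¹ * (L + M * ‖h‖ * Y) :=
  (of_add_eq hx).norm_le hB0 hκ (by have := (norm_nonneg y).trans hY; positivity) (by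
    linarith [neg_bilinear_le (hB h) (by positivity) hY x])

theorem norm_sub_le_of_add_eq (hx₁ : ∀ χ, B w y₁ χ + B (u + h) x₁ χ + κ * ⟪x₁, χ⟫ = ℓ₁ χ)
    (hx₀ : ∀ χ, B w y₀ χ + B u x₀ χ + κ * ⟪x₀, χ⟫ = ℓ₀ χ) (hB0 : ∀ y, B u y y = 0)
    (hB : ∀ u x y, |B u x y| ≤ M * ‖u‖ * ‖x‖ * ‖y‖) (hM : 0 ≤ M) (hκ : 0 < κ) (hL : 0 ≤ L)
    (hY : ‖y₁ - y₀‖ ≤ Y) (hX : ‖x₁‖ ≤ X) (hℓ : ℓ₁ (x₁ - x₀) - ℓ₀ (x₁ - x₀) ≤ L * ‖x₁ - x₀‖) :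
    ‖x₁ - x₀‖ ≤ κ⁻¹ * (L + M * ‖w‖ * Y + M * ‖h‖ * X) :=
  (of_add_eq hx₁).norm_sub_le (of_add_eq hx₀) hB0 hB hM hκ
    (by have := (norm_nonneg _).trans hY; positivity) hX (by
      have hw := neg_bilinear_le (hB w) (by positivity) hY (x₁ - x₀)
      rw [LinearMap.map_sub₂] at hw
      linarith)

end IsOseenSolution

end Oseen

theorem inv_mul_add_le_inv_min_mul {ν κ r a b : ℝ} (hν : 0 < ν) (hκ : 0 < κ)
    (hrη : r ≤ min ν κ) (ha : 0 ≤ a) (hb : 0 ≤ b) :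
    ν⁻¹ * (r * (κ⁻¹ * b) + a) ≤ (min ν κ)⁻¹ * (a + b) := by
  have hη : 0 < min ν κ := lt_min hν hκ
  have hrν : ν⁻¹ * r ≤ 1 := inv_mul_le_one_of_le₀ (hrη.trans (min_le_left ν κ)) hν.le
  calc ν⁻¹ * (r * (κ⁻¹ * b) + a) = ν⁻¹ * a + (ν⁻¹ * r) * (κ⁻¹ * b) := by ring
    _ ≤ (min ν κ)⁻¹ * a + 1 * ((min ν κ)⁻¹ * b) := by
      gcongr
      exacts [min_le_left ν κ, min_le_right ν κ]
    _ = (min ν κ)⁻¹ * (a + b) := by ring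

theorem mul_inv_sq_le_inv_min {ν κ r : ℝ} (hν : 0 < ν) (hκ : 0 < κ)
    (hrη : r ≤ min ν κ) : r * κ⁻¹ ^ 2 ≤ (min ν κ)⁻¹ :=
  calc r * κ⁻¹ ^ 2 ≤ κ * κ⁻¹ ^ 2 := by gcongr; exact hrη.trans (min_le_right ν κ)
    _ = κ⁻¹ := by field_simp
    _ ≤ (min ν κ)⁻¹ := inv_anti₀ (lt_min hν hκ) (min_le_right ν κ)

theorem derivative_componentwise_lipschitz_general
    {V W : Type*} [NormedAddCommGroup V] [InnerProductSpace ℝ V]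
    [NormedAddCommGroup W] [InnerProductSpace ℝ W]
    (ν κ Ri M CP : ℝ) (hν : 0 < ν) (hκ : 0 < κ) (hRi : 0 < Ri) (hM : 0 < M)
    (b : V →ₗ[ℝ] V →ₗ[ℝ] V →ₗ[ℝ] ℝ)
    (hb0 : ∀ u v : V, b u v v = 0)
    (hb : ∀ u v w : V, |b u v w| ≤ M * ‖u‖ * ‖v‖ * ‖w‖)
    (bs : V →ₗ[ℝ] W →ₗ[ℝ] W →ₗ[ℝ] ℝ)
    (hbs0 : ∀ (u : V) (φ : W), bs u φ φ = 0)
    (hbs : ∀ (u : V) (φ ψ : W), |bs u φ ψ| ≤ M * ‖u‖ * ‖φ‖ * ‖ψ‖)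
    (c : W →ₗ[ℝ] V →ₗ[ℝ] ℝ)
    (hc : ∀ (θ : W) (v : V), |c θ v| ≤ CP ^ 2 * ‖θ‖ * ‖v‖)
    (f : V →L[ℝ] ℝ) (γ : W →L[ℝ] ℝ)
    (G₁ : V → W → V) (G₂ : V → W → W)
    (hG : ∀ (u : V) (θ : W),
      (∀ v : V, b u (G₁ u θ) v + ν * ⟪G₁ u θ, v⟫ = Ri * c (G₂ u θ) v + f v) ∧
      (∀ χ : W, bs u (G₂ u θ) χ + κ * ⟪G₂ u θ, χ⟫ = γ χ))
    (G₁' : V → W → V → W → V) (G₂' : V → W → V → W → W)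
    (hG' : ∀ (u : V) (θ : W) (h : V) (s : W),
      (∀ v : V, b h (G₁ u θ) v + b u (G₁' u θ h s) v + ν * ⟪G₁' u θ h s, v⟫
          = Ri * c (G₂' u θ h s) v) ∧
      (∀ χ : W, bs h (G₂ u θ) χ + bs u (G₂' u θ h s) χ + κ * ⟪G₂' u θ h s, χ⟫ = 0))
    (hsd2 : (min ν κ)⁻¹ * Ri * CP ^ 2 < 1)
    (u h w : V) (θ s z : W) :
    ‖G₂' (u + h) (θ + s) w z - G₂' u θ w z‖
        ≤ 2 * M ^ 2 * κ⁻¹ ^ 2 * (κ⁻¹ * ‖γ‖) * ‖w‖ * ‖h‖ ∧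
    ‖G₁' (u + h) (θ + s) w z - G₁' u θ w z‖
        ≤ 2 * ν⁻¹ * (min ν κ)⁻¹ * M ^ 2 * ((Ri * CP ^ 2 * ν⁻¹ * κ⁻¹ * ‖γ‖ + ν⁻¹ * ‖f‖) + 2 * (κ⁻¹ * ‖γ‖)) * ‖w‖ * ‖h‖ := by
  have hrη : Ri * CP ^ 2 ≤ min ν κ := by
    rw [mul_assoc, inv_mul_lt_iff₀ (lt_min hν hκ), mul_one] at hsd2
    exact hsd2.le
  obtain ⟨K₂, hK₂, hK₂0⟩ : ∃ K₂, κ⁻¹ * ‖γ‖ = K₂ ∧ 0 ≤ K₂ := ⟨_, rfl, by positivity⟩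
  obtain ⟨K₁, hK₁, hK₁0⟩ : ∃ K₁, ν⁻¹ * (Ri * CP ^ 2 * K₂ + ‖f‖) = K₁ ∧ 0 ≤ K₁ :=
    ⟨_, rfl, by positivity⟩
  have hG₂ : ∀ u θ, ‖G₂ u θ‖ ≤ K₂ := fun u θ => hK₂ ▸
    IsOseenSolution.norm_le (hG u θ).2 (hbs0 u) hκ (norm_nonneg γ)
      ((Real.le_norm_self _).trans (γ.le_opNorm _))
  have hG₁ : ∀ u θ, ‖G₁ u θ‖ ≤ K₁ := fun u θ => hK₁ ▸
    IsOseenSolution.norm_le (hG u θ).1 (hb0 u) hν (by positivity) (by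
      linarith [mul_bilinear_le hc (sq_nonneg CP) hRi.le (hG₂ u θ) (G₁ u θ),
        (Real.le_norm_self _).trans (f.le_opNorm (G₁ u θ))])
  have hG₂' : ∀ u θ h s, ‖G₂' u θ h s‖ ≤ κ⁻¹ * (M * ‖h‖ * K₂) := fun u θ h s => by
    simpa only [zero_add] using IsOseenSolution.norm_le_of_add_eq (hG' u θ h s).2 (hbs0 u) hbs
      hM.le hκ le_rfl (hG₂ u θ) (by simp)
  have hG₁' : ∀ u θ h s, ‖G₁' u θ h s‖ ≤ (min ν κ)⁻¹ * (M * ‖h‖ * K₁ + M * ‖h‖ * K₂) :=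
    fun u θ h s => (IsOseenSolution.norm_le_of_add_eq (hG' u θ h s).1 (hb0 u) hb hM.le hν
      (by positivity) (hG₁ u θ) (mul_bilinear_le hc (sq_nonneg CP) hRi.le (hG₂' u θ h s) _)).trans
      (inv_mul_add_le_inv_min_mul hν hκ hrη (by positivity) (by positivity))
  have hΔG₂ : ‖G₂ (u + h) (θ + s) - G₂ u θ‖ ≤ κ⁻¹ * (M * ‖h‖ * K₂) := by
    simpa only [zero_add] using IsOseenSolution.norm_sub_le (hG (u + h) (θ + s)).2 (hG u θ).2
      (hbs0 u) hbs hM.le hκ le_rfl (hG₂ _ _) (by simp)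
  have hΔG₁ : ‖G₁ (u + h) (θ + s) - G₁ u θ‖
      ≤ (min ν κ)⁻¹ * (M * ‖h‖ * K₁ + M * ‖h‖ * K₂) :=
    (IsOseenSolution.norm_sub_le (hG (u + h) (θ + s)).1 (hG u θ).1 (hb0 u) hb hM.le hν
      (by positivity) (hG₁ _ _) (by
        linarith [mul_bilinear_sub_le hc (sq_nonneg CP) hRi.le hΔG₂
          (G₁ (u + h) (θ + s) - G₁ u θ)])).trans
      (inv_mul_add_le_inv_min_mul hν hκ hrη (by positivity) (by positivity))
  have he₂ : ‖G₂' (u + h) (θ + s) w z - G₂' u θ w z‖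
      ≤ 2 * M ^ 2 * κ⁻¹ ^ 2 * K₂ * ‖w‖ * ‖h‖ :=
    (IsOseenSolution.norm_sub_le_of_add_eq (hG' (u + h) (θ + s) w z).2 (hG' u θ w z).2
      (hbs0 u) hbs hM.le hκ le_rfl hΔG₂ (hG₂' _ _ _ _) (by simp)).trans_eq (by ring)
  have he₁ := IsOseenSolution.norm_sub_le_of_add_eq (hG' (u + h) (θ + s) w z).1
    (hG' u θ w z).1 (hb0 u) hb hM.le hν (by positivity) hΔG₁ (hG₁' _ _ _ _)
    (mul_bilinear_sub_le hc (sq_nonneg CP) hRi.le he₂ _)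
  have hbuoyancy := mul_le_mul_of_nonneg_left (mul_le_mul_of_nonneg_right
    (mul_inv_sq_le_inv_min hν hκ hrη) (by positivity : 0 ≤ 2 * M ^ 2 * K₂ * ‖w‖ * ‖h‖))
    (inv_nonneg.2 hν.le)
  subst hK₁ hK₂
  exact ⟨he₂, he₁.trans (by linarith)⟩

/-- Componentwise Lipschitz bounds on the derivative `G'`. -/
theorem derivative_componentwise_lipschitz
    {V W : Type*} [NormedAddCommGroup V] [InnerProductSpace ℝ V] [FiniteDimensional ℝ V]
    [NormedAddCommGroup W] [InnerProductSpace ℝ W] [FiniteDimensional ℝ W]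
    (ν κ Ri M CP : ℝ) (hν : 0 < ν) (hκ : 0 < κ) (hRi : 0 < Ri) (hM : 0 < M) (hCP : 0 < CP)
    (b : V →ₗ[ℝ] V →ₗ[ℝ] V →ₗ[ℝ] ℝ)
    (hb0 : ∀ u v : V, b u v v = 0)
    (hb : ∀ u v w : V, |b u v w| ≤ M * ‖u‖ * ‖v‖ * ‖w‖)
    (bs : V →ₗ[ℝ] W →ₗ[ℝ] W →ₗ[ℝ] ℝ)
    (hbs0 : ∀ (u : V) (φ : W), bs u φ φ = 0)
    (hbs : ∀ (u : V) (φ ψ : W), |bs u φ ψ| ≤ M * ‖u‖ * ‖φ‖ * ‖ψ‖)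
    (c : W →ₗ[ℝ] V →ₗ[ℝ] ℝ)
    (hc : ∀ (θ : W) (v : V), |c θ v| ≤ CP ^ 2 * ‖θ‖ * ‖v‖)
    (f : V →L[ℝ] ℝ) (γ : W →L[ℝ] ℝ)
    (G₁ : V → W → V) (G₂ : V → W → W)
    (hG : ∀ (u : V) (θ : W),
      (∀ v : V, b u (G₁ u θ) v + ν * ⟪G₁ u θ, v⟫ = Ri * c (G₂ u θ) v + f v) ∧
      (∀ χ : W, bs u (G₂ u θ) χ + κ * ⟪G₂ u θ, χ⟫ = γ χ))
    (G₁' : V → W → V → W → V) (G₂' : V → W → V → W → W)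
    (hG' : ∀ (u : V) (θ : W) (h : V) (s : W),
      (∀ v : V, b h (G₁ u θ) v + b u (G₁' u θ h s) v + ν * ⟪G₁' u θ h s, v⟫
          = Ri * c (G₂' u θ h s) v) ∧
      (∀ χ : W, bs h (G₂ u θ) χ + bs u (G₂' u θ h s) χ + κ * ⟪G₂' u θ h s, χ⟫ = 0))
    (hsd1 : (min ν κ)⁻¹ ^ 2 * M *
        (2 * (Ri * CP ^ 2 * κ⁻¹ * ‖γ‖ + ‖f‖) + κ⁻¹ ^ 2 * M * ‖γ‖ ^ 2) < 1)
    (hsd2 : (min ν κ)⁻¹ * Ri * CP ^ 2 < 1)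
    (u h w : V) (θ s z : W) :
    ‖G₂' (u + h) (θ + s) w z - G₂' u θ w z‖
        ≤ 2 * M ^ 2 * κ⁻¹ ^ 2 * (κ⁻¹ * ‖γ‖) * ‖w‖ * ‖h‖ ∧
    ‖G₁' (u + h) (θ + s) w z - G₁' u θ w z‖
        ≤ 2 * ν⁻¹ * (min ν κ)⁻¹ * M ^ 2 * ((Ri * CP ^ 2 * ν⁻¹ * κ⁻¹ * ‖γ‖ + ν⁻¹ * ‖f‖) + 2 * (κ⁻¹ * ‖γ‖)) * ‖w‖ * ‖h‖ :=
  derivative_componentwise_lipschitz_general ν κ Ri M CP hν hκ hRi hM b hb0 hb bs hbs0 hbs c hc f γ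
    G₁ G₂ hG G₁' G₂' hG' hsd2 u h w θ s z
end
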